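/- arXiv:1509.04488 — 10 statements merged into one kernel-verified Lean document; each statement's English description precedes it below -/
import Mathlib

section
/- Let d, k, t be positive integers with gcd(k,d) = 1 and t ≥ 3, and let (G,σ) be a signed graph. If (G,σ) has a (tk, td)-coloring, then (G,σ) has a ((t−2)k, (t−2)d)-coloring. -/
/-- Contraction map: in each period of length `t`, increase by `t-2`, pausing at
residues `0` and `t-1`. -/
def Fm (t x : ℤ) : ℤ := x / t * (t - 2) + max 0 (x % t - 1)

lemma Fm_eval {t q r : ℤ} (ht : 0 < t) (h0 : 0 ≤ r) (h1 : r < t) :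
    Fm t (t * q + r) = q * (t - 2) + max 0 (r - 1) := by
  unfold Fm
  have e1 : t * q + r = r + q * t := by ring
  rw [e1, Int.add_mul_ediv_right _ _ ht.ne', Int.add_mul_emod_self_right,
    Int.ediv_eq_zero_of_lt h0 h1, Int.emod_eq_of_lt h0 h1]
  ring

lemma Fm_succ_le {t : ℤ} (ht : 3 ≤ t) (x : ℤ) :
    Fm t x ≤ Fm t (x + 1) ∧ Fm t (x + 1) ≤ Fm t x + 1 := by
  have ht0 : (0:ℤ) < t := by omega
  obtain ⟨q, r, hx, hr0, hr1⟩ : ∃ q r, x = t * q + r ∧ 0 ≤ r ∧ r < t :=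
    ⟨x / t, x % t, (Int.mul_ediv_add_emod x t).symm, Int.emod_nonneg x ht0.ne',
      Int.emod_lt_of_pos x ht0⟩
  have evx : Fm t x = q * (t - 2) + max 0 (r - 1) := by rw [hx]; exact Fm_eval ht0 hr0 hr1
  rcases eq_or_lt_of_le (by omega : r + 1 ≤ t) with hlast | hmid
  · have h1 : x + 1 = t * (q + 1) + 0 := by linear_combination hx + hlast
    have evx1 : Fm t (x + 1) = (q + 1) * (t - 2) + max 0 (0 - 1) := by
      rw [h1]; exact Fm_eval ht0 le_rfl ht0
    rw [evx, evx1, max_eq_right (by omega : (0:ℤ) ≤ r - 1)]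
    rw [max_eq_left (by omega : (0:ℤ) - 1 ≤ 0)]
    constructor <;> nlinarith
  · have h1 : x + 1 = t * q + (r + 1) := by linear_combination hx
    have evx1 : Fm t (x + 1) = q * (t - 2) + max 0 (r + 1 - 1) := by
      rw [h1]; exact Fm_eval ht0 (by omega) hmid
    rw [evx, evx1]
    rcases le_or_gt r 0 with h | h
    · have hr' : r = 0 := le_antisymm h hr0
      simp [hr']
    · rw [max_eq_right (by omega : (0:ℤ) ≤ r - 1), max_eq_right (by omega : (0:ℤ) ≤ r + 1 - 1)]
      omega

lemma Fm_mono {t : ℤ} (ht : 3 ≤ t) : Monotone (Fm t) :=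
  monotone_int_of_le_succ fun n => (Fm_succ_le ht n).1

lemma Fm_add_mul {t : ℤ} (ht : 0 < t) (x j : ℤ) : Fm t (x + j * t) = Fm t x + j * (t - 2) := by
  obtain ⟨q, r, hx, hr0, hr1⟩ : ∃ q r, x = t * q + r ∧ 0 ≤ r ∧ r < t :=
    ⟨x / t, x % t, (Int.mul_ediv_add_emod x t).symm, Int.emod_nonneg x ht.ne',
      Int.emod_lt_of_pos x ht⟩
  have evx : Fm t x = q * (t - 2) + max 0 (r - 1) := by rw [hx]; exact Fm_eval ht hr0 hr1
  have h1 : x + j * t = t * (q + j) + r := by linear_combination hx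
  have evx1 : Fm t (x + j * t) = (q + j) * (t - 2) + max 0 (r - 1) := by
    rw [h1]; exact Fm_eval ht hr0 hr1
  rw [evx, evx1]; ring

lemma Fm_neg {t : ℤ} (ht : 3 ≤ t) (x : ℤ) : Fm t (-x) = -Fm t x := by
  have ht0 : (0:ℤ) < t := by omega
  obtain ⟨q, r, hx, hr0, hr1⟩ : ∃ q r, x = t * q + r ∧ 0 ≤ r ∧ r < t :=
    ⟨x / t, x % t, (Int.mul_ediv_add_emod x t).symm, Int.emod_nonneg x ht0.ne',
      Int.emod_lt_of_pos x ht0⟩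
  have evx : Fm t x = q * (t - 2) + max 0 (r - 1) := by rw [hx]; exact Fm_eval ht0 hr0 hr1
  rcases eq_or_lt_of_le hr0 with h0 | hpos
  · have h1 : -x = t * (-q) + 0 := by linear_combination -hx + h0
    have evn : Fm t (-x) = (-q) * (t - 2) + max 0 (0 - 1) := by
      rw [h1]; exact Fm_eval ht0 le_rfl ht0
    rw [evx, evn, ← h0]
    rw [max_eq_left (by omega : (0:ℤ) - 1 ≤ 0)]
    ring
  · have h1 : -x = t * (-q - 1) + (t - r) := by linear_combination -hx
    have evn : Fm t (-x) = (-q - 1) * (t - 2) + max 0 (t - r - 1) := by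
      rw [h1]; exact Fm_eval ht0 (by omega) (by omega)
    rw [evx, evn]
    rw [max_eq_right (by omega : (0:ℤ) ≤ t - r - 1), max_eq_right (by omega : (0:ℤ) ≤ r - 1)]
    ring

lemma Fm_window {t dd kk : ℤ} (ht : 3 ≤ t) (x L : ℤ)
    (h1 : t * dd ≤ L) (h2 : L ≤ t * kk - t * dd) :
    (t - 2) * dd ≤ Fm t (x + L) - Fm t x ∧
      Fm t (x + L) - Fm t x ≤ (t - 2) * kk - (t - 2) * dd := by
  have ht0 : (0:ℤ) < t := by omega
  have e1 : Fm t (x + dd * t) = Fm t x + dd * (t - 2) := Fm_add_mul ht0 x dd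
  have e2 : Fm t (x + (kk - dd) * t) = Fm t x + (kk - dd) * (t - 2) := Fm_add_mul ht0 x (kk - dd)
  have m1 : Fm t (x + dd * t) ≤ Fm t (x + L) := Fm_mono ht (by nlinarith)
  have m2 : Fm t (x + L) ≤ Fm t (x + (kk - dd) * t) := Fm_mono ht (by nlinarith)
  constructor <;> nlinarith

variable {V : Type*}

/-- A signature of a graph `G`: a symmetric function assigning `+1` or `-1` to each edge. -/
def IsSignature (G : SimpleGraph V) (σ : V → V → ℤ) : Prop :=
  (∀ v w, σ v w = σ w v) ∧ ∀ v w, G.Adj v w → σ v w = 1 ∨ σ v w = -1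

/-- `c : V → ZMod k` is a `(k,d)`-coloring of the signed graph `(G,σ)`:
for every edge `vw`, `|c v - σ(vw) * c w|_k ≥ d`, where `|x|_k = min([x]_k, [-x]_k)`. -/
def IsKDColoring (G : SimpleGraph V) (σ : V → V → ℤ) (k d : ℕ) (c : V → ZMod k) : Prop :=
  ∀ v w, G.Adj v w →
    d ≤ min (ZMod.val (c v - (σ v w : ZMod k) * c w))
            (ZMod.val (-(c v - (σ v w : ZMod k) * c w)))

/-- `(G,σ)` has a `(k,d)`-coloring (with the standing assumptions `k,d ≥ 1`, `k ≥ 2d`). -/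
def HasKDColoring (G : SimpleGraph V) (σ : V → V → ℤ) (k d : ℕ) : Prop :=
  0 < k ∧ 0 < d ∧ 2 * d ≤ k ∧ ∃ c : V → ZMod k, IsKDColoring G σ k d c

/-- The circular chromatic number of a signed graph: the infimum of `k/d` over all
pairs `(k,d)` for which a `(k,d)`-coloring exists. -/
noncomputable def chiC (G : SimpleGraph V) (σ : V → V → ℤ) : ℝ :=
  sInf { r : ℝ | ∃ k d : ℕ, HasKDColoring G σ k d ∧ r = (k : ℝ) / d }

/-- The chromatic number of a signed graph: the least `k` with a `(k,1)`-coloring. -/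
noncomputable def chi (G : SimpleGraph V) (σ : V → V → ℤ) : ℕ :=
  sInf { k : ℕ | HasKDColoring G σ k 1 }

/-- If `gcd(k,d) = 1`, `t ≥ 3`, and `(G,σ)` has a `(tk,td)`-coloring, then it has a
`((t-2)k,(t-2)d)`-coloring. -/
theorem hasColoring_sub_two_of_hasColoring_mul
    (G : SimpleGraph V) (σ : V → V → ℤ) (hσ : IsSignature G σ)
    (k d t : ℕ) (hk : 0 < k) (hd : 0 < d) (hgcd : Nat.gcd k d = 1) (ht : 3 ≤ t)
    (h : HasKDColoring G σ (t * k) (t * d)) :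
    HasKDColoring G σ ((t - 2) * k) ((t - 2) * d) := by
  obtain ⟨hn, -, h2dk, c, hc⟩ := h
  have ht0 : 0 < t := by omega
  have hkd : 2 * d ≤ k := by
    have h1 : t * (2 * d) ≤ t * k := by
      calc t * (2 * d) = 2 * (t * d) := by ring
        _ ≤ t * k := h2dk
    exact Nat.le_of_mul_le_mul_left h1 ht0
  have hm : 0 < (t - 2) * k := Nat.mul_pos (by omega) hk
  have hD : 0 < (t - 2) * d := Nat.mul_pos (by omega) hd
  refine ⟨hm, hD, ?_, ?_⟩
  · calc 2 * ((t - 2) * d) = (t - 2) * (2 * d) := by ring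
      _ ≤ (t - 2) * k := Nat.mul_le_mul_left _ hkd
  haveI : NeZero (t * k) := ⟨hn.ne'⟩
  haveI : NeZero ((t - 2) * k) := ⟨hm.ne'⟩
  have htZ : (3:ℤ) ≤ (t:ℤ) := by exact_mod_cast ht
  refine ⟨fun v => ((Fm t ((c v).val : ℤ) : ℤ) : ZMod ((t - 2) * k)), fun v w hvw => ?_⟩
  beta_reduce
  obtain ⟨s, hs⟩ : ∃ s : ℤ, s = σ v w := ⟨_, rfl⟩
  obtain ⟨x, hxdef⟩ : ∃ x : ℤ, x = ((c v).val : ℤ) := ⟨_, rfl⟩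
  obtain ⟨y, hydef⟩ : ∃ y : ℤ, y = ((c w).val : ℤ) := ⟨_, rfl⟩
  rw [← hs, ← hxdef, ← hydef]
  have hs1 : s = 1 ∨ s = -1 := hs ▸ hσ.2 v w hvw
  have hcvw := hc v w hvw
  rw [← hs] at hcvw
  obtain ⟨e, he⟩ : ∃ e : ZMod (t * k), e = c v - (s : ZMod (t * k)) * c w := ⟨_, rfl⟩
  rw [← he] at hcvw
  obtain ⟨hval1, hval2⟩ := le_min_iff.mp hcvw
  have htd0 : 0 < t * d := Nat.mul_pos ht0 hd
  have hene : e ≠ 0 := by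
    intro h0
    have h0' : e.val = 0 := by rw [h0]; exact ZMod.val_zero
    omega
  have hevlt : e.val < t * k := ZMod.val_lt e
  have hnegval : (-e).val = t * k - e.val := by
    rw [ZMod.neg_val, if_neg hene]
  obtain ⟨L, hL⟩ : ∃ L : ℤ, L = (e.val : ℤ) := ⟨_, rfl⟩
  have hval1Z : (t:ℤ) * (d:ℤ) ≤ L := by
    rw [hL]
    have h1 := (Nat.cast_le (α := ℤ)).mpr hval1
    push_cast at h1; linarith
  have hevleZ : L ≤ (t:ℤ) * (k:ℤ) - (t:ℤ) * (d:ℤ) := by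
    rw [hL]
    have h1 : e.val + t * d ≤ t * k := by omega
    have h2 := (Nat.cast_le (α := ℤ)).mpr h1
    push_cast at h2; linarith
  -- divisibility
  have hcast : ((x - s * y - L : ℤ) : ZMod (t * k)) = 0 := by
    rw [hxdef, hydef, hL]
    push_cast [ZMod.natCast_val, ZMod.cast_id]
    rw [he]
    ring
  obtain ⟨qq, hqq⟩ := (ZMod.intCast_zmod_eq_zero_iff_dvd _ _).mp hcast
  push_cast at hqq
  -- window lemma
  have hwin := Fm_window (dd := (d:ℤ)) (kk := (k:ℤ)) htZ (s * y) L hval1Z hevleZ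
  obtain ⟨M, hMdef⟩ : ∃ M : ℤ, M = Fm t (s * y + L) - Fm t (s * y) := ⟨_, rfl⟩
  rw [← hMdef] at hwin
  obtain ⟨hMd, hMu⟩ := hwin
  have hFx : Fm t x = M + Fm t (s * y) + qq * ((k:ℤ) * ((t:ℤ) - 2)) := by
    have harg : x = (s * y + L) + (qq * k) * t := by linear_combination hqq
    rw [harg, Fm_add_mul (by linarith) _ (qq * k), hMdef]
    ring
  have hFsy : Fm t (s * y) = s * Fm t y := by
    rcases hs1 with h1 | h1
    · rw [h1]; ring_nf
    · rw [h1, neg_one_mul, neg_one_mul, Fm_neg htZ]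
  have hmcast : (((t - 2) * k : ℕ) : ℤ) = ((t:ℤ) - 2) * k := by
    push_cast [Nat.cast_sub (by omega : 2 ≤ t)]; ring
  have hDcast : (((t - 2) * d : ℕ) : ℤ) = ((t:ℤ) - 2) * d := by
    push_cast [Nat.cast_sub (by omega : 2 ≤ t)]; ring
  obtain ⟨e', he'⟩ : ∃ e' : ZMod ((t - 2) * k),
      e' = ((Fm t x : ℤ) : ZMod ((t - 2) * k))
        - (s : ZMod ((t - 2) * k)) * ((Fm t y : ℤ) : ZMod ((t - 2) * k)) := ⟨_, rfl⟩
  rw [← he']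
  have he'M : e' = ((M : ℤ) : ZMod ((t - 2) * k)) := by
    rw [he']
    have h3 : ((Fm t x : ℤ) : ZMod ((t - 2) * k))
          - (s : ZMod ((t - 2) * k)) * ((Fm t y : ℤ) : ZMod ((t - 2) * k))
        = ((Fm t x - s * Fm t y : ℤ) : ZMod ((t - 2) * k)) := by push_cast; ring
    have h2 : Fm t x - s * Fm t y = M + qq * (((t - 2) * k : ℕ) : ℤ) := by
      rw [← hFsy, hmcast, hFx]; ring
    rw [h3, h2, Int.cast_add, Int.cast_mul, Int.cast_natCast, ZMod.natCast_self,
      mul_zero, add_zero]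
  have hdZ : (0:ℤ) < ((t:ℤ) - 2) * d :=
    mul_pos (by linarith) (by exact_mod_cast hd)
  have hMnonneg : 0 ≤ M := le_trans hdZ.le hMd
  have hMlt : M < (((t - 2) * k : ℕ) : ℤ) := by rw [hmcast]; linarith
  have hMD : (((t - 2) * d : ℕ) : ℤ) ≤ M := by rw [hDcast]; exact hMd
  have hMU : M ≤ (((t - 2) * k : ℕ) : ℤ) - (((t - 2) * d : ℕ) : ℤ) := by
    rw [hmcast, hDcast]; exact hMu
  have he'nat : e' = ((M.toNat : ℕ) : ZMod ((t - 2) * k)) := by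
    rw [he'M]
    conv_rhs => rw [← Int.cast_natCast, Int.toNat_of_nonneg hMnonneg]
  have hval' : e'.val = M.toNat := by
    rw [he'nat, ZMod.val_cast_of_lt (by omega)]
  have he'ne : e' ≠ 0 := by
    intro h0
    have h0' : e'.val = 0 := by rw [h0]; exact ZMod.val_zero
    omega
  have hnegval' : (-e').val = (t - 2) * k - e'.val := by
    rw [ZMod.neg_val, if_neg he'ne]
  exact le_min (by omega) (by omega)
end

section
/- Let (G,σ) be a signed graph on n vertices and let k, d be positive integers with gcd(k,d) = 1. If (G,σ) has a (2k, 2d)-coloring and k > 2n, then (G,σ) has a (k,d)-coloring. -/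
variable {V : Type*}

lemma mod_cases {M N : ℕ} (hN : 0 < N) (hM : M ≤ 2 * N) :
    M % N < N ∧ (M % N = M ∨ M % N + N = M ∨ M % N + 2 * N = M) := by
  refine ⟨Nat.mod_lt M hN, ?_⟩
  rcases Nat.lt_or_ge M N with h | h
  · left; exact Nat.mod_eq_of_lt h
  rcases Nat.lt_or_ge M (2*N) with h2 | h2
  · right; left
    rw [Nat.mod_eq_sub_mod h, Nat.mod_eq_of_lt (by omega)]; omega
  · right; right
    have hM2 : M = 2 * N := by omega
    subst hM2
    rw [Nat.mod_eq_sub_mod (by omega), Nat.mod_eq_sub_mod (by omega)]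
    have : 2 * N - N - N = 0 := by omega
    rw [this]
    simp

lemma cast_sub_of_le {k B : ℕ} [NeZero k] (hB : B ≤ k) :
    ((k - B : ℕ) : ZMod k) = -(B : ZMod k) := by
  have h : ((k - B : ℕ) : ZMod k) + (B : ZMod k) = 0 := by
    rw [← Nat.cast_add]
    rw [Nat.sub_add_cancel hB]
    exact ZMod.natCast_self k
  linear_combination h

lemma val_sub_eq {m : ℕ} [NeZero m] (x y : ZMod m) :
    (x - y).val = (x.val + (m - y.val)) % m := by
  have hy := (ZMod.val_lt y).le
  have h1 : ((m - y.val : ℕ) : ZMod m) = -y := by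
    rw [cast_sub_of_le hy, ZMod.natCast_rightInverse y]
  have h2 : x - y = x + ((m - y.val : ℕ) : ZMod m) := by rw [h1]; ring
  rw [h2, ZMod.val_add, ZMod.val_natCast]
  conv_rhs => rw [Nat.add_mod]
  rw [Nat.mod_eq_of_lt (ZMod.val_lt x)]

lemma wadd {k : ℕ} [NeZero k] {d A B : ℕ} (hd : 0 < d)
    (h1 : d ≤ (A + B) % k) (h2 : (A + B) % k + d ≤ k) :
    d ≤ min (((A : ZMod k) + (B : ZMod k)).val) ((-((A : ZMod k) + (B : ZMod k))).val) := by
  have hv : ((A : ZMod k) + (B : ZMod k)).val = (A + B) % k := by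
    rw [ZMod.val_add, ZMod.val_natCast, ZMod.val_natCast, ← Nat.add_mod]
  have hne : ((A : ZMod k) + (B : ZMod k)) ≠ 0 := by
    intro h0
    rw [h0, ZMod.val_zero] at hv
    omega
  rw [ZMod.neg_val, if_neg hne, hv]
  omega

lemma wsub {k : ℕ} [NeZero k] {d A B : ℕ} (hd : 0 < d) (hB : B ≤ k)
    (h1 : d ≤ (A + (k - B)) % k) (h2 : (A + (k - B)) % k + d ≤ k) :
    d ≤ min (((A : ZMod k) - (B : ZMod k)).val) ((-((A : ZMod k) - (B : ZMod k))).val) := by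
  have h3 : (A : ZMod k) - (B : ZMod k) = (A : ZMod k) + ((k - B : ℕ) : ZMod k) := by
    rw [cast_sub_of_le hB]; ring
  rw [h3]
  exact wadd hd h1 h2

lemma exists_good_f (k : ℕ) [NeZero k] (T : Finset (ZMod k)) (hT : 2 * T.card < k)
    (a : ZMod k) (hpar : k % 2 = 1 ∨ (k % 2 = 0 ∧ ∃ α : ZMod k, α + α = a)) :
    ∃ f : ZMod k → Bool,
      (∀ t, t ∈ T → t + 1 ∈ T → f t = true → f (t + 1) = true) ∧
      (∀ t s, t ∈ T → s ∈ T → t + s = a → (f t = true ∨ f s = true)) ∧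
      (∀ t s, t ∈ T → s ∈ T → t + s = a - 2 → (f t = false ∨ f s = false)) := by
  rcases T.eq_empty_or_nonempty with rfl | ⟨t0, ht0⟩
  · exact ⟨fun _ => true, by simp, by simp, by simp⟩
  have hk3 : 3 ≤ k := by
    have : 1 ≤ T.card := Finset.card_pos.mpr ⟨t0, ht0⟩
    omega
  haveI : Fact (1 < k) := ⟨by omega⟩
  rcases hpar with hodd | ⟨heven, α, hα⟩
  · -- k odd
    set m := k / 2 with hm
    have hk2 : k = 2 * m + 1 := by omega
    set p : ZMod k := ((m + 1 : ℕ) : ZMod k) * (a - 1) with hp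
    have hpp : p + p = a - 1 := by
      have h12 : ((m + 1 : ℕ) : ZMod k) + ((m + 1 : ℕ) : ZMod k) = 1 := by
        rw [← Nat.cast_add]
        have he : (m + 1 + (m + 1)) = k + 1 := by omega
        rw [he]
        push_cast
        simp
      calc p + p = (((m+1:ℕ):ZMod k) + ((m+1:ℕ):ZMod k)) * (a - 1) := by ring
      _ = a - 1 := by rw [h12, one_mul]
    obtain ⟨j, hjm, hjT⟩ : ∃ j, j ≤ m ∧ j ∉ T.image (fun t => min ((t - p).val) (k - (t - p).val)) := by
      by_contra hcon
      push_neg at hcon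
      have hsub : Finset.range (m+1) ⊆ T.image (fun t => min ((t - p).val) (k - (t - p).val)) := by
        intro j hj
        exact hcon j (Nat.lt_succ_iff.mp (Finset.mem_range.mp hj))
      have h1 := Finset.card_le_card hsub
      have h2 := Finset.card_image_le (s := T) (f := fun t => min ((t - p).val) (k - (t - p).val))
      rw [Finset.card_range] at h1
      omega
    have hfree : ∀ t ∈ T, min ((t - p).val) (k - (t - p).val) ≠ j := by
      intro t ht hcon
      exact hjT (Finset.mem_image.mpr ⟨t, ht, hcon⟩)
    refine ⟨fun t => decide (((t - p).val ≤ m ∧ (t - p).val < j) ∨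
        (m < (t - p).val ∧ j ≤ k - (t - p).val)), ?_, ?_, ?_⟩
    · intro t ht ht1 hft
      simp only [decide_eq_true_eq] at hft ⊢
      have e1 : (t + 1 - p) = (t - p) + 1 := by ring
      have hr1 : (t + 1 - p).val = ((t - p).val + 1) % k := by
        rw [e1, ZMod.val_add, ZMod.val_one]
      have h1 := ZMod.val_lt (t - p)
      have h2 := ZMod.val_lt (t + 1 - p)
      have hf1 := hfree t ht
      have hf2 := hfree (t+1) ht1
      have hmc := (mod_cases (M := (t - p).val + 1) (N := k) (by omega) (by omega)).2
      omega
    · intro t s ht hs hts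
      simp only [decide_eq_true_eq]
      have hab : (t - p) + (s - p) = 1 := by
        have : (t - p) + (s - p) = (t + s) - (p + p) := by ring
        rw [this, hts, hpp]
        ring
      have hsum : ((t - p).val + (s - p).val) % k = 1 := by
        rw [← ZMod.val_add, hab, ZMod.val_one]
      have h1 := ZMod.val_lt (t - p)
      have h2 := ZMod.val_lt (s - p)
      have hf1 := hfree t ht
      have hf2 := hfree s hs
      have hmc := (mod_cases (M := (t - p).val + (s - p).val) (N := k) (by omega) (by omega)).2
      omega
    · intro t s ht hs hts
      simp only [decide_eq_false_iff_not, decide_eq_true_eq]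
      have hab : (t - p) + (s - p) = -1 := by
        have h0 : (t - p) + (s - p) = (t + s) - (p + p) := by ring
        rw [h0, hts, hpp]
        ring
      have hneg1 : ((-1 : ZMod k)).val = k - 1 := by
        have : (-1 : ZMod k) = ((k - 1 : ℕ) : ZMod k) := by
          rw [cast_sub_of_le (by omega : 1 ≤ k)]
          simp
        rw [this, ZMod.val_natCast, Nat.mod_eq_of_lt (by omega)]
      have hsum : ((t - p).val + (s - p).val) % k = k - 1 := by
        rw [← ZMod.val_add, hab, hneg1]
      have h1 := ZMod.val_lt (t - p)
      have h2 := ZMod.val_lt (s - p)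
      have hf1 := hfree t ht
      have hf2 := hfree s hs
      have hmc := (mod_cases (M := (t - p).val + (s - p).val) (N := k) (by omega) (by omega)).2
      omega
  · -- k even
    set hh := k / 2 with hhdef
    have hk2 : k = 2 * hh := by omega
    obtain ⟨j, hjm, hjT⟩ : ∃ j, j < hh ∧ j ∉ T.image (fun t => min ((t - α).val) (k - 1 - (t - α).val)) := by
      by_contra hcon
      push_neg at hcon
      have hsub : Finset.range hh ⊆ T.image (fun t => min ((t - α).val) (k - 1 - (t - α).val)) := by
        intro j hj
        exact hcon j (Finset.mem_range.mp hj)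
      have h1 := Finset.card_le_card hsub
      have h2 := Finset.card_image_le (s := T) (f := fun t => min ((t - α).val) (k - 1 - (t - α).val))
      rw [Finset.card_range] at h1
      omega
    have hfree : ∀ t ∈ T, min ((t - α).val) (k - 1 - (t - α).val) ≠ j := by
      intro t ht hcon
      exact hjT (Finset.mem_image.mpr ⟨t, ht, hcon⟩)
    refine ⟨fun t => decide (((t - α).val < hh ∧ (t - α).val < j) ∨
        (hh ≤ (t - α).val ∧ j ≤ k - 1 - (t - α).val)), ?_, ?_, ?_⟩
    · intro t ht ht1 hft
      simp only [decide_eq_true_eq] at hft ⊢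
      have e1 : (t + 1 - α) = (t - α) + 1 := by ring
      have hr1 : (t + 1 - α).val = ((t - α).val + 1) % k := by
        rw [e1, ZMod.val_add, ZMod.val_one]
      have h1 := ZMod.val_lt (t - α)
      have h2 := ZMod.val_lt (t + 1 - α)
      have hf1 := hfree t ht
      have hf2 := hfree (t+1) ht1
      have hmc := (mod_cases (M := (t - α).val + 1) (N := k) (by omega) (by omega)).2
      omega
    · intro t s ht hs hts
      simp only [decide_eq_true_eq]
      have hab : (t - α) + (s - α) = 0 := by
        have h0 : (t - α) + (s - α) = (t + s) - (α + α) := by ring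
        rw [h0, hts, hα]
        ring
      have hsum : ((t - α).val + (s - α).val) % k = 0 := by
        rw [← ZMod.val_add, hab, ZMod.val_zero]
      have h1 := ZMod.val_lt (t - α)
      have h2 := ZMod.val_lt (s - α)
      have hf1 := hfree t ht
      have hf2 := hfree s hs
      have hmc := (mod_cases (M := (t - α).val + (s - α).val) (N := k) (by omega) (by omega)).2
      omega
    · intro t s ht hs hts
      simp only [decide_eq_false_iff_not, decide_eq_true_eq]
      have hab : (t - α) + (s - α) = -2 := by
        have h0 : (t - α) + (s - α) = (t + s) - (α + α) := by ring
        rw [h0, hts, hα]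
        ring
      have hneg2 : ((-2 : ZMod k)).val = k - 2 := by
        have h0 : (-2 : ZMod k) = ((k - 2 : ℕ) : ZMod k) := by
          rw [cast_sub_of_le (by omega : 2 ≤ k)]
          push_cast
          ring
        rw [h0, ZMod.val_natCast, Nat.mod_eq_of_lt (by omega)]
      have hsum : ((t - α).val + (s - α).val) % k = k - 2 := by
        rw [← ZMod.val_add, hab, hneg2]
      have h1 := ZMod.val_lt (t - α)
      have h2 := ZMod.val_lt (s - α)
      have hf1 := hfree t ht
      have hf2 := hfree s hs
      have hmc := (mod_cases (M := (t - α).val + (s - α).val) (N := k) (by omega) (by omega)).2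
      omega

set_option maxHeartbeats 2000000 in
/-- If a signed graph on `n` vertices has a `(2k,2d)`-coloring with `gcd(k,d) = 1` and
`k > 2n`, then it has a `(k,d)`-coloring. -/
theorem hasColoring_halve
    [Fintype V] (G : SimpleGraph V) (σ : V → V → ℤ) (hσ : IsSignature G σ)
    (k d : ℕ) (hgcd : Nat.gcd k d = 1) (hk : 2 * Fintype.card V < k)
    (h : HasKDColoring G σ (2 * k) (2 * d)) :
    HasKDColoring G σ k d := by
  obtain ⟨h2k, h2d, hled, c, hc⟩ := h
  have hk0 : 0 < k := by omega
  have hd0 : 0 < d := by omega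
  have hdk : 2 * d ≤ k := by omega
  haveI : NeZero k := ⟨by omega⟩
  haveI : NeZero (2 * k) := ⟨by omega⟩
  haveI : Fact (1 < k) := ⟨by omega⟩
  refine ⟨hk0, hd0, hdk, ?_⟩
  -- inverse of d mod k
  set e : ℕ := ((d : ZMod k)⁻¹).val with he_def
  have hunit : IsUnit ((d : ℕ) : ZMod k) := by
    rw [ZMod.isUnit_iff_coprime]
    exact Nat.coprime_comm.mp hgcd
  have hed : (e : ZMod k) * ((d : ℕ) : ZMod k) = 1 := by
    rw [he_def, ZMod.natCast_rightInverse]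
    exact ZMod.inv_mul_of_unit _ hunit
  set a : ZMod k := 1 - ((e : ℕ) : ZMod k) with ha_def
  -- t-coordinates
  set tv : V → ZMod k := fun u => (e : ZMod k) * (((c u).val / 2 : ℕ) : ZMod k) with htv
  set T : Finset (ZMod k) :=
    (Finset.univ.filter (fun u => (c u).val % 2 = 1)).image tv with hTdef
  have hTcard : 2 * T.card < k := by
    have h1 : T.card ≤ (Finset.univ.filter (fun u => (c u).val % 2 = 1)).card :=
      Finset.card_image_le
    have h2 : (Finset.univ.filter (fun u => (c u).val % 2 = 1)).card ≤ Fintype.card V := by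
      simpa using Finset.card_filter_le Finset.univ (fun u => (c u).val % 2 = 1)
    omega
  have hpar : k % 2 = 1 ∨ (k % 2 = 0 ∧ ∃ α : ZMod k, α + α = a) := by
    rcases Nat.mod_two_eq_zero_or_one k with hke | hko
    · right
      refine ⟨hke, ?_⟩
      have hdo : d % 2 = 1 := by
        rcases Nat.mod_two_eq_zero_or_one d with hde | hdo
        · exfalso
          have h2g : 2 ∣ Nat.gcd k d := Nat.dvd_gcd (by omega) (by omega)
          rw [hgcd] at h2g
          omega
        · exact hdo
      have hde2 : (d * e) % 2 = 1 := by
        have hcast1 : ((d * e : ℕ) : ZMod k) = 1 := by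
          push_cast
          rw [mul_comm]
          exact hed
        have hval : (d * e) % k = 1 := by
          have := congrArg ZMod.val hcast1
          rwa [ZMod.val_natCast, ZMod.val_one] at this
        have h2 := Nat.mod_mod_of_dvd (d * e) (⟨k / 2, by omega⟩ : (2:ℕ) ∣ k)
        rw [hval] at h2
        omega
      have heo : e % 2 = 1 := by
        rw [Nat.mul_mod, hdo, one_mul] at hde2
        omega
      have hek : e < k := ZMod.val_lt _
      have hav : a.val % 2 = 0 := by
        have hveq : a.val = ((1 : ZMod k).val + (k - ((e : ℕ) : ZMod k).val)) % k := by
          rw [ha_def]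
          exact val_sub_eq _ _
        rw [ZMod.val_one, ZMod.val_natCast, Nat.mod_eq_of_lt hek] at hveq
        have hmc := mod_cases (M := 1 + (k - e)) (N := k) hk0 (by omega)
        omega
      refine ⟨((a.val / 2 : ℕ) : ZMod k), ?_⟩
      rw [← Nat.cast_add]
      have : a.val / 2 + a.val / 2 = a.val := by omega
      rw [this]
      exact ZMod.natCast_rightInverse a
    · left; exact hko
  obtain ⟨f, hfA, hfB, hfC⟩ := exists_good_f k T hTcard a hpar
  set g : V → ℕ := fun u =>
    (c u).val / 2 + (if (c u).val % 2 = 1 then (if f (tv u) then 1 else 0) else 0) with hgdef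
  refine ⟨fun u => ((g u : ℕ) : ZMod k), ?_⟩
  intro v w hvw

  -- per-edge proof
  have hnt : Nontrivial V := ⟨v, w, hvw.ne⟩
  have hcard2 : 2 ≤ Fintype.card V := Fintype.one_lt_card
  have hk5 : 5 ≤ k := by omega
  have h2dk : 2 * d < k := by
    rcases Nat.lt_or_ge (2 * d) k with h' | h'
    · exact h'
    · exfalso
      have hdd : d ∣ Nat.gcd k d := Nat.dvd_gcd ⟨2, by omega⟩ dvd_rfl
      rw [hgcd] at hdd
      have hd1 : d = 1 := Nat.dvd_one.mp hdd
      omega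
  have hXlt : (c v).val < 2 * k := ZMod.val_lt _
  have hYlt : (c w).val < 2 * k := ZMod.val_lt _
  have hgbv : g v ≤ k := by
    have := ZMod.val_lt (c v)
    simp only [hgdef]
    split_ifs <;> omega
  have hgbw : g w ≤ k := by
    have := ZMod.val_lt (c w)
    simp only [hgdef]
    split_ifs <;> omega
  have hcvw := hc v w hvw
  rcases hσ.2 v w hvw with hs1 | hs1
  · -- positive edge
    rw [hs1] at hcvw ⊢
    push_cast at hcvw ⊢
    rw [one_mul] at hcvw ⊢
    have hne : c v - c w ≠ 0 := by
      intro h0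
      rw [h0] at hcvw
      simp only [ZMod.val_zero, neg_zero, min_self] at hcvw
      omega
    rw [ZMod.neg_val, if_neg hne] at hcvw
    have hzv : (c v - c w).val = ((c v).val + (2 * k - (c w).val)) % (2 * k) :=
      val_sub_eq _ _
    rw [hzv] at hcvw
    have hmcZ := mod_cases (M := (c v).val + (2 * k - (c w).val)) (N := 2 * k)
      (by omega) (by omega)
    obtain ⟨hm1, hm2⟩ : d ≤ (g v + (k - g w)) % k ∧ (g v + (k - g w)) % k + d ≤ k := by
      have hmcM := mod_cases (M := g v + (k - g w)) (N := k) hk0 (by omega)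
      rcases Nat.mod_two_eq_zero_or_one (c v).val with hxp | hxp <;>
        rcases Nat.mod_two_eq_zero_or_one (c w).val with hyp | hyp
      · -- even, even
        have hgve : g v = (c v).val / 2 := by simp [hgdef, hxp]
        have hgwe : g w = (c w).val / 2 := by simp [hgdef, hyp]
        omega
      · -- even, odd
        have hgve : g v = (c v).val / 2 := by simp [hgdef, hxp]
        cases hfw : f (tv w)
        · have hgwe : g w = (c w).val / 2 := by simp [hgdef, hyp, hfw]
          omega
        · have hgwe : g w = (c w).val / 2 + 1 := by simp [hgdef, hyp, hfw]
          omega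
      · -- odd, even
        have hgwe : g w = (c w).val / 2 := by simp [hgdef, hyp]
        cases hfv : f (tv v)
        · have hgve : g v = (c v).val / 2 := by simp [hgdef, hxp, hfv]
          omega
        · have hgve : g v = (c v).val / 2 + 1 := by simp [hgdef, hxp, hfv]
          omega
      · -- odd, odd
        have hvT : tv v ∈ T := by
          rw [hTdef]
          exact Finset.mem_image_of_mem _
            (Finset.mem_filter.mpr ⟨Finset.mem_univ _, hxp⟩)
        have hwT : tv w ∈ T := by
          rw [hTdef]
          exact Finset.mem_image_of_mem _
            (Finset.mem_filter.mpr ⟨Finset.mem_univ _, hyp⟩)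
        rcases eq_or_ne (((c v).val + (2 * k - (c w).val)) % (2 * k)) (2 * d) with
          htight | hnt1
        · -- tight, tv v = tv w + 1
          have hd2 : (c v).val / 2 + k = (c w).val / 2 + d ∨
              (c v).val / 2 = (c w).val / 2 + d := by omega
          have hcast : (((c v).val / 2 : ℕ) : ZMod k) =
              (((c w).val / 2 : ℕ) : ZMod k) + ((d : ℕ) : ZMod k) := by
            rcases hd2 with hh | hh
            · have hcc := congrArg (fun n : ℕ => (n : ZMod k)) hh
              push_cast at hcc
              rw [ZMod.natCast_self] at hcc
              linear_combination hcc
            · have hcc := congrArg (fun n : ℕ => (n : ZMod k)) hh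
              push_cast at hcc
              linear_combination hcc
          have htvrel : tv v = tv w + 1 := by
            simp only [htv]
            rw [hcast, mul_add, hed]
          have himp : f (tv w) = true → f (tv v) = true := by
            intro hfw
            rw [htvrel]
            exact hfA (tv w) hwT (htvrel ▸ hvT) hfw
          cases hfv : f (tv v) <;> cases hfw : f (tv w)
          · have hgve : g v = (c v).val / 2 := by simp [hgdef, hxp, hfv]
            have hgwe : g w = (c w).val / 2 := by simp [hgdef, hyp, hfw]
            omega
          · exact absurd (himp hfw) (by simp [hfv])
          · have hgve : g v = (c v).val / 2 + 1 := by simp [hgdef, hxp, hfv]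
            have hgwe : g w = (c w).val / 2 := by simp [hgdef, hyp, hfw]
            omega
          · have hgve : g v = (c v).val / 2 + 1 := by simp [hgdef, hxp, hfv]
            have hgwe : g w = (c w).val / 2 + 1 := by simp [hgdef, hyp, hfw]
            omega
        rcases eq_or_ne (((c v).val + (2 * k - (c w).val)) % (2 * k)) (2 * k - 2 * d) with
          htight | hnt2
        · -- tight the other way, tv w = tv v + 1
          have hd2 : (c w).val / 2 + k = (c v).val / 2 + d ∨
              (c w).val / 2 = (c v).val / 2 + d := by omega
          have hcast : (((c w).val / 2 : ℕ) : ZMod k) =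
              (((c v).val / 2 : ℕ) : ZMod k) + ((d : ℕ) : ZMod k) := by
            rcases hd2 with hh | hh
            · have hcc := congrArg (fun n : ℕ => (n : ZMod k)) hh
              push_cast at hcc
              rw [ZMod.natCast_self] at hcc
              linear_combination hcc
            · have hcc := congrArg (fun n : ℕ => (n : ZMod k)) hh
              push_cast at hcc
              linear_combination hcc
          have htvrel : tv w = tv v + 1 := by
            simp only [htv]
            rw [hcast, mul_add, hed]
          have himp : f (tv v) = true → f (tv w) = true := by
            intro hfv
            rw [htvrel]
            exact hfA (tv v) hvT (htvrel ▸ hwT) hfv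
          cases hfv : f (tv v) <;> cases hfw : f (tv w)
          · have hgve : g v = (c v).val / 2 := by simp [hgdef, hxp, hfv]
            have hgwe : g w = (c w).val / 2 := by simp [hgdef, hyp, hfw]
            omega
          · have hgve : g v = (c v).val / 2 := by simp [hgdef, hxp, hfv]
            have hgwe : g w = (c w).val / 2 + 1 := by simp [hgdef, hyp, hfw]
            omega
          · exact absurd (himp hfv) (by simp [hfw])
          · have hgve : g v = (c v).val / 2 + 1 := by simp [hgdef, hxp, hfv]
            have hgwe : g w = (c w).val / 2 + 1 := by simp [hgdef, hyp, hfw]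
            omega
        · -- not tight
          cases hfv : f (tv v) <;> cases hfw : f (tv w)
          · have hgve : g v = (c v).val / 2 := by simp [hgdef, hxp, hfv]
            have hgwe : g w = (c w).val / 2 := by simp [hgdef, hyp, hfw]
            omega
          · have hgve : g v = (c v).val / 2 := by simp [hgdef, hxp, hfv]
            have hgwe : g w = (c w).val / 2 + 1 := by simp [hgdef, hyp, hfw]
            omega
          · have hgve : g v = (c v).val / 2 + 1 := by simp [hgdef, hxp, hfv]
            have hgwe : g w = (c w).val / 2 := by simp [hgdef, hyp, hfw]
            omega
          · have hgve : g v = (c v).val / 2 + 1 := by simp [hgdef, hxp, hfv]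
            have hgwe : g w = (c w).val / 2 + 1 := by simp [hgdef, hyp, hfw]
            omega
    exact wsub hd0 hgbw hm1 hm2
  · -- negative edge
    rw [hs1] at hcvw ⊢
    push_cast at hcvw ⊢
    rw [neg_one_mul, sub_neg_eq_add] at hcvw ⊢
    have hne : c v + c w ≠ 0 := by
      intro h0
      rw [h0] at hcvw
      simp only [ZMod.val_zero, neg_zero, min_self] at hcvw
      omega
    rw [ZMod.neg_val, if_neg hne] at hcvw
    have hzv : (c v + c w).val = ((c v).val + (c w).val) % (2 * k) := ZMod.val_add _ _
    rw [hzv] at hcvw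
    have hmcZ := mod_cases (M := (c v).val + (c w).val) (N := 2 * k)
      (by omega) (by omega)
    obtain ⟨hm1, hm2⟩ : d ≤ (g v + g w) % k ∧ (g v + g w) % k + d ≤ k := by
      have hmcM := mod_cases (M := g v + g w) (N := k) hk0 (by omega)
      rcases Nat.mod_two_eq_zero_or_one (c v).val with hxp | hxp <;>
        rcases Nat.mod_two_eq_zero_or_one (c w).val with hyp | hyp
      · have hgve : g v = (c v).val / 2 := by simp [hgdef, hxp]
        have hgwe : g w = (c w).val / 2 := by simp [hgdef, hyp]
        omega
      · have hgve : g v = (c v).val / 2 := by simp [hgdef, hxp]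
        cases hfw : f (tv w)
        · have hgwe : g w = (c w).val / 2 := by simp [hgdef, hyp, hfw]
          omega
        · have hgwe : g w = (c w).val / 2 + 1 := by simp [hgdef, hyp, hfw]
          omega
      · have hgwe : g w = (c w).val / 2 := by simp [hgdef, hyp]
        cases hfv : f (tv v)
        · have hgve : g v = (c v).val / 2 := by simp [hgdef, hxp, hfv]
          omega
        · have hgve : g v = (c v).val / 2 + 1 := by simp [hgdef, hxp, hfv]
          omega
      · -- odd, odd
        have hvT : tv v ∈ T := by
          rw [hTdef]
          exact Finset.mem_image_of_mem _
            (Finset.mem_filter.mpr ⟨Finset.mem_univ _, hxp⟩)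
        have hwT : tv w ∈ T := by
          rw [hTdef]
          exact Finset.mem_image_of_mem _
            (Finset.mem_filter.mpr ⟨Finset.mem_univ _, hyp⟩)
        rcases eq_or_ne (((c v).val + (c w).val) % (2 * k)) (2 * d) with htight | hnt1
        · -- tight: tv v + tv w = a
          have hd2 : (c v).val / 2 + (c w).val / 2 + 1 = d ∨
              (c v).val / 2 + (c w).val / 2 + 1 = d + k := by omega
          have hcast : (((c v).val / 2 : ℕ) : ZMod k) + (((c w).val / 2 : ℕ) : ZMod k)
              = ((d : ℕ) : ZMod k) - 1 := by
            rcases hd2 with hh | hh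
            · have hcc := congrArg (fun n : ℕ => (n : ZMod k)) hh
              push_cast at hcc
              linear_combination hcc
            · have hcc := congrArg (fun n : ℕ => (n : ZMod k)) hh
              push_cast at hcc
              rw [ZMod.natCast_self] at hcc
              linear_combination hcc
          have hrel : tv v + tv w = a := by
            simp only [htv, ha_def]
            linear_combination (e : ZMod k) * hcast + hed
          have himp := hfB (tv v) (tv w) hvT hwT hrel
          cases hfv : f (tv v) <;> cases hfw : f (tv w)
          · rw [hfv, hfw] at himp
            rcases himp with hbad | hbad <;> exact absurd hbad (by simp)
          · have hgve : g v = (c v).val / 2 := by simp [hgdef, hxp, hfv]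
            have hgwe : g w = (c w).val / 2 + 1 := by simp [hgdef, hyp, hfw]
            omega
          · have hgve : g v = (c v).val / 2 + 1 := by simp [hgdef, hxp, hfv]
            have hgwe : g w = (c w).val / 2 := by simp [hgdef, hyp, hfw]
            omega
          · have hgve : g v = (c v).val / 2 + 1 := by simp [hgdef, hxp, hfv]
            have hgwe : g w = (c w).val / 2 + 1 := by simp [hgdef, hyp, hfw]
            omega
        rcases eq_or_ne (((c v).val + (c w).val) % (2 * k)) (2 * k - 2 * d) with
          htight | hnt2
        · -- tight: tv v + tv w = a - 2
          have hd2 : (c v).val / 2 + (c w).val / 2 + 1 + d = k ∨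
              (c v).val / 2 + (c w).val / 2 + 1 + d = 2 * k := by omega
          have hcast : (((c v).val / 2 : ℕ) : ZMod k) + (((c w).val / 2 : ℕ) : ZMod k)
              = - ((d : ℕ) : ZMod k) - 1 := by
            rcases hd2 with hh | hh
            · have hcc := congrArg (fun n : ℕ => (n : ZMod k)) hh
              push_cast at hcc
              rw [ZMod.natCast_self] at hcc
              linear_combination hcc
            · have hh2 : (c v).val / 2 + (c w).val / 2 + 1 + d = k + k := by omega
              have hcc : (((c v).val / 2 + (c w).val / 2 + 1 + d : ℕ) : ZMod k)
                  = ((k + k : ℕ) : ZMod k) := by rw [hh2]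
              push_cast [ZMod.natCast_self] at hcc
              linear_combination hcc
          have hrel : tv v + tv w = a - 2 := by
            simp only [htv, ha_def]
            linear_combination (e : ZMod k) * hcast - hed
          have himp := hfC (tv v) (tv w) hvT hwT hrel
          cases hfv : f (tv v) <;> cases hfw : f (tv w)
          · have hgve : g v = (c v).val / 2 := by simp [hgdef, hxp, hfv]
            have hgwe : g w = (c w).val / 2 := by simp [hgdef, hyp, hfw]
            omega
          · have hgve : g v = (c v).val / 2 := by simp [hgdef, hxp, hfv]
            have hgwe : g w = (c w).val / 2 + 1 := by simp [hgdef, hyp, hfw]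
            omega
          · have hgve : g v = (c v).val / 2 + 1 := by simp [hgdef, hxp, hfv]
            have hgwe : g w = (c w).val / 2 := by simp [hgdef, hyp, hfw]
            omega
          · rw [hfv, hfw] at himp
            rcases himp with hbad | hbad <;> exact absurd hbad (by simp)
        · -- not tight
          cases hfv : f (tv v) <;> cases hfw : f (tv w)
          · have hgve : g v = (c v).val / 2 := by simp [hgdef, hxp, hfv]
            have hgwe : g w = (c w).val / 2 := by simp [hgdef, hyp, hfw]
            omega
          · have hgve : g v = (c v).val / 2 := by simp [hgdef, hxp, hfv]
            have hgwe : g w = (c w).val / 2 + 1 := by simp [hgdef, hyp, hfw]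
            omega
          · have hgve : g v = (c v).val / 2 + 1 := by simp [hgdef, hxp, hfv]
            have hgwe : g w = (c w).val / 2 := by simp [hgdef, hyp, hfw]
            omega
          · have hgve : g v = (c v).val / 2 + 1 := by simp [hgdef, hxp, hfv]
            have hgwe : g w = (c w).val / 2 + 1 := by simp [hgdef, hyp, hfw]
            omega
    exact wadd hd0 hm1 hm2
end

section
/- If a signed graph (G,σ) has a (k,d)-coloring and k' is a positive integer with k' > k, then (G,σ) has a (k',d)-coloring. -/
variable {V : Type*}

private lemma half_key (k k' d : ℕ) (hkk' : (k:ℤ) ≤ k') (hd : 0 < d) (t : ℤ)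
    (h0 : 0 ≤ t) (hub : t < k) (h1 : (d:ℤ) ≤ t % k) (h2 : (d:ℤ) ≤ (-t) % k) :
    (d:ℤ) ≤ t % k' ∧ (d:ℤ) ≤ (-t) % k' := by
  have hk0 : (0:ℤ) < k := lt_of_le_of_lt h0 hub
  have e1 : t % k = t := Int.emod_eq_of_lt h0 hub
  have ht0 : 0 < t := by
    rw [e1] at h1; omega
  have e2 : (-t) % k = k - t := by
    conv_lhs => rw [show -t = (k - t) + k * (-1) by ring]
    rw [Int.add_mul_emod_self_left, Int.emod_eq_of_lt (by omega) (by omega)]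
  rw [e1] at h1; rw [e2] at h2
  constructor
  · rw [Int.emod_eq_of_lt h0 (by omega)]; exact h1
  · rw [show -t = (k' - t) + k' * (-1) by ring, Int.add_mul_emod_self_left,
      Int.emod_eq_of_lt (by omega) (by omega)]
    omega

private lemma full_key (k k' d : ℕ) (hkk' : (k:ℤ) ≤ k') (hd : 0 < d) (t : ℤ)
    (hlb : -(k:ℤ) < t) (hub : t < k) (h1 : (d:ℤ) ≤ t % k) (h2 : (d:ℤ) ≤ (-t) % k) :
    (d:ℤ) ≤ t % k' ∧ (d:ℤ) ≤ (-t) % k' := by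
  rcases le_or_gt 0 t with h0 | h0
  · exact half_key k k' d hkk' hd t h0 hub h1 h2
  · have := half_key k k' d hkk' hd (-t) (by omega) (by omega) h2 (by rwa [neg_neg])
    rw [neg_neg] at this
    exact ⟨this.2, this.1⟩

/-- If a signed graph has a `(k,d)`-coloring and `k' > k`, then it has a
`(k',d)`-coloring. -/
theorem hasColoring_bigger_k
    (G : SimpleGraph V) (σ : V → V → ℤ) (hσ : IsSignature G σ)
    (k d k' : ℕ) (hk' : k < k') (h : HasKDColoring G σ k d) :
    HasKDColoring G σ k' d := by
  obtain ⟨hk, hd, h2d, c, hc⟩ := h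
  haveI : NeZero k := ⟨by omega⟩
  haveI : NeZero k' := ⟨by omega⟩
  refine ⟨by omega, hd, by omega, ?_⟩
  set r : V → ℤ := fun v =>
    if 2 * (c v).val ≤ k then ((c v).val : ℤ) else ((c v).val : ℤ) - k with hr
  refine ⟨fun v => ((r v : ℤ) : ZMod k'), ?_⟩
  have hcast : ∀ v, ((r v : ℤ) : ZMod k) = c v := by
    intro v
    simp only [hr]
    split_ifs
    · simp [ZMod.natCast_val, ZMod.cast_id]
    · push_cast
      simp [ZMod.natCast_val, ZMod.cast_id]
  have hrb : ∀ v, -(k:ℤ) < 2 * r v ∧ 2 * r v ≤ k := by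
    intro v
    have hv : (c v).val < k := ZMod.val_lt (c v)
    simp only [hr]
    split_ifs with hif <;> omega
  intro v w hvw
  have hcvw := hc v w hvw
  set t : ℤ := r v - σ v w * r w with ht
  have hXk : c v - (σ v w : ZMod k) * c w = ((t : ℤ) : ZMod k) := by
    rw [← hcast v, ← hcast w, ht]; push_cast; ring
  have hXk' : (((r v : ℤ) : ZMod k') - (σ v w : ZMod k') * ((r w : ℤ) : ZMod k'))
      = ((t : ℤ) : ZMod k') := by
    rw [ht]; push_cast; ring
  rw [hXk] at hcvw
  rw [le_min_iff] at hcvw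
  have hneg : -((t : ℤ) : ZMod k) = ((-t : ℤ) : ZMod k) := by push_cast; ring
  rw [hneg] at hcvw
  have h1 : (d : ℤ) ≤ t % k := by
    have := hcvw.1
    have e := ZMod.val_intCast (n := k) t
    omega
  have h2 : (d : ℤ) ≤ (-t) % k := by
    have := hcvw.2
    have e := ZMod.val_intCast (n := k) (-t)
    omega
  have hb : -(k:ℤ) < t ∧ t ≤ k := by
    have h1 := hrb v
    have h2 := hrb w
    rcases hσ.2 v w hvw with hs | hs <;> rw [hs] at ht <;> omega
  have htk : t ≠ k := by
    intro he
    rw [he] at h1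
    simp [Int.emod_self] at h1
    omega
  have key := full_key k k' d (by exact_mod_cast hk'.le) hd t hb.1 (by omega) h1 h2
  show d ≤ min (ZMod.val (((r v : ℤ) : ZMod k') - (σ v w : ZMod k') * ((r w : ℤ) : ZMod k')))
      (ZMod.val (-(((r v : ℤ) : ZMod k') - (σ v w : ZMod k') * ((r w : ℤ) : ZMod k'))))
  rw [hXk', le_min_iff]
  have hneg' : -((t : ℤ) : ZMod k') = ((-t : ℤ) : ZMod k') := by push_cast; ring
  rw [hneg']
  have e1 := ZMod.val_intCast (n := k') t
  have e2 := ZMod.val_intCast (n := k') (-t)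
  omega
end

section
/- If a signed graph (G,σ) has a (k,d)-coloring, and k', d' are positive integers with 2d' ≤ k' and k/d < k'/d', then (G,σ) has a (k',d')-coloring. -/
variable {V : Type*}

private lemma key_ineq (k d k' d' t s m R : ℤ) (hk : 0 < k) (hk' : 0 < k')
    (hdk : d' * k < d * k') (ht1 : d ≤ t) (ht2 : t ≤ k - d)
    (hR1 : -(2 * k) < R) (hR2 : R ≤ 2 * k)
    (hs : 2 * k * s = 2 * t * k' + 2 * k * (m * k') + R) :
    d' ≤ s - m * k' ∧ s - m * k' ≤ k' - d' := by
  have h1 : d * k' ≤ t * k' := mul_le_mul_of_nonneg_right ht1 hk'.le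
  have h2 : t * k' ≤ (k - d) * k' := mul_le_mul_of_nonneg_right ht2 hk'.le
  constructor
  · by_contra hcon
    push_neg at hcon
    have h3 : s - m * k' ≤ d' - 1 := by linarith
    have h4 : 2 * k * (s - m * k') ≤ 2 * k * (d' - 1) :=
      mul_le_mul_of_nonneg_left h3 (by linarith)
    nlinarith
  · by_contra hcon
    push_neg at hcon
    have h3 : k' - d' + 1 ≤ s - m * k' := by linarith
    have h4 : 2 * k * (k' - d' + 1) ≤ 2 * k * (s - m * k') :=
      mul_le_mul_of_nonneg_left h3 (by linarith)
    nlinarith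

private lemma val_bound (k' d' : ℕ) [NeZero k'] (s u m : ℤ)
    (h1 : (d' : ℤ) ≤ u) (h2 : u ≤ (k' : ℤ) - d') (hd' : 0 < d')
    (hm : s = u + m * k') :
    d' ≤ min ((s : ZMod k').val) ((-(s : ZMod k')).val) := by
  have hk' : (0 : ℤ) < k' := by
    have := NeZero.pos k'; exact_mod_cast this
  have hd'' : (0:ℤ) < d' := by exact_mod_cast hd'
  have hu1 : (0:ℤ) < u := lt_of_lt_of_le hd'' h1
  have hu2 : u < k' := by linarith
  have hval : ((s : ZMod k').val : ℤ) = u := by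
    rw [ZMod.val_intCast, hm, Int.add_mul_emod_self_right, Int.emod_eq_of_lt hu1.le hu2]
  have hvaln : (((-(s : ZMod k')).val : ℤ)) = (k' : ℤ) - u := by
    have : (-(s : ZMod k')) = ((-s : ℤ) : ZMod k') := by push_cast; ring
    rw [this, ZMod.val_intCast]
    have hms : -s = ((k' : ℤ) - u) + (-m - 1) * k' := by rw [hm]; ring
    rw [hms, Int.add_mul_emod_self_right, Int.emod_eq_of_lt (by linarith) (by linarith)]
  refine le_min ?_ ?_
  · have : (d' : ℤ) ≤ ((s : ZMod k').val : ℤ) := hval ▸ h1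
    exact_mod_cast this
  · have : (d' : ℤ) ≤ (((-(s : ZMod k')).val : ℤ)) := hvaln ▸ (by linarith : (d' : ℤ) ≤ (k' : ℤ) - u)
    exact_mod_cast this

private lemma round_spec (k k' a : ℕ) (hk : 0 < k) :
    ∃ e : ℤ, 0 ≤ e ∧ e < 2 * k ∧
      2 * (k:ℤ) * (((2 * a * k' + k) / (2 * k) : ℕ) : ℤ) = 2 * a * k' + k - e := by
  refine ⟨(((2 * a * k' + k) % (2 * k) : ℕ) : ℤ), by positivity, ?_, ?_⟩
  · exact_mod_cast Nat.mod_lt _ (by omega)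
  · have h := Nat.div_add_mod (2 * a * k' + k) (2 * k)
    have h2 : (2*(k:ℤ)) * (((2*a*k'+k)/(2*k) : ℕ) : ℤ) + (((2*a*k'+k) % (2*k) : ℕ) : ℤ)
        = 2*(a:ℤ)*k'+k := by exact_mod_cast h
    linarith

/-- If a signed graph has a `(k,d)`-coloring and `k', d'` are positive integers with
`2d' ≤ k'` and `k/d < k'/d'`, then it has a `(k',d')`-coloring. -/
theorem hasColoring_bigger_ratio
    (G : SimpleGraph V) (σ : V → V → ℤ) (hσ : IsSignature G σ)
    (k d k' d' : ℕ) (hk' : 0 < k') (hd' : 0 < d') (hkd' : 2 * d' ≤ k')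
    (hlt : (k : ℝ) / d < (k' : ℝ) / d')
    (h : HasKDColoring G σ k d) :
    HasKDColoring G σ k' d' := by
  obtain ⟨hk, hd, hkd, c, hc⟩ := h
  haveI : NeZero k := ⟨hk.ne'⟩
  haveI : NeZero k' := ⟨hk'.ne'⟩
  have hdk : (d' : ℤ) * k < (d : ℤ) * k' := by
    have h0 : (0:ℝ) < d := by exact_mod_cast hd
    have h0' : (0:ℝ) < d' := by exact_mod_cast hd'
    have h1 := (div_lt_div_iff₀ h0 h0').mp hlt
    have h2 : (d':ℝ) * k < (d:ℝ) * k' := by linarith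
    exact_mod_cast h2
  have hkZ : (0:ℤ) < k := by exact_mod_cast hk
  have hk'Z : (0:ℤ) < k' := by exact_mod_cast hk'
  refine ⟨hk', hd', hkd', fun v => (((2 * (c v).val * k' + k) / (2 * k) : ℕ) : ZMod k'), ?_⟩
  intro v w hvw
  have hedge := hc v w hvw
  obtain ⟨ea, hea0, hea1, hfa⟩ := round_spec k k' (c v).val hk
  obtain ⟨eb, heb0, heb1, hfb⟩ := round_spec k k' (c w).val hk
  set a := (c v).val with hadef
  set b := (c w).val with hbdef
  set fa := (2 * a * k' + k) / (2 * k) with hfadef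
  set fb := (2 * b * k' + k) / (2 * k) with hfbdef
  obtain hσ1 | hσ1 := hσ.2 v w hvw
  · rw [hσ1] at hedge ⊢
    simp only [Int.cast_one, one_mul] at hedge ⊢
    set x : ZMod k := c v - c w with hxdef
    set t := x.val with htdef
    have ht1 : d ≤ t := le_trans hedge (min_le_left _ _)
    have hxne : x ≠ 0 := by
      intro h0
      have : t = 0 := by rw [htdef, h0, ZMod.val_zero]
      omega
    have hnegval : (-x).val = k - t := by rw [ZMod.neg_val, if_neg hxne]
    have ht2 : t ≤ k - d := by
      have := le_trans hedge (min_le_right _ _)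
      omega
    have hcast : (((a:ℤ) - b : ℤ) : ZMod k) = ((t:ℤ) : ZMod k) := by
      push_cast
      simp only [hadef, hbdef, htdef, ZMod.natCast_val, ZMod.cast_id, hxdef]
    obtain ⟨m, hm⟩ := (ZMod.intCast_eq_intCast_iff _ _ _).mp hcast |>.dvd
    -- hm : (t:ℤ) - ((a:ℤ) - b) = k * m
    set s : ℤ := (fa : ℤ) - fb with hsdef
    have hs : 2 * (k:ℤ) * s = 2 * (t:ℤ) * k' + 2 * k * ((-m) * k') + (eb - ea) := by
      rw [hsdef]
      linear_combination hfa - hfb - 2 * (k':ℤ) * hm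
    have htZ1 : (d:ℤ) ≤ (t:ℤ) := by exact_mod_cast ht1
    have htZ2 : (t:ℤ) ≤ (k:ℤ) - d := by
      have : t + d ≤ k := by omega
      have := (by exact_mod_cast this : (t:ℤ) + d ≤ k)
      linarith
    obtain ⟨hu1, hu2⟩ := key_ineq k d k' d' t s (-m) (eb - ea) hkZ hk'Z hdk htZ1 htZ2
      (by linarith) (by linarith) hs
    have hexpr : (fa : ZMod k') - (fb : ZMod k') = ((s : ℤ) : ZMod k') := by
      rw [hsdef]; push_cast; ring
    rw [hexpr]
    exact val_bound k' d' s (s - (-m) * k') (-m) hu1 hu2 hd' (by ring)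
  · rw [hσ1] at hedge ⊢
    simp only [Int.cast_neg, Int.cast_one, neg_mul, one_mul, sub_neg_eq_add] at hedge ⊢
    set x : ZMod k := c v + c w with hxdef
    set t := x.val with htdef
    have ht1 : d ≤ t := le_trans hedge (min_le_left _ _)
    have hxne : x ≠ 0 := by
      intro h0
      have : t = 0 := by rw [htdef, h0, ZMod.val_zero]
      omega
    have hnegval : (-x).val = k - t := by rw [ZMod.neg_val, if_neg hxne]
    have ht2 : t ≤ k - d := by
      have := le_trans hedge (min_le_right _ _)
      omega
    have hcast : (((a:ℤ) + b : ℤ) : ZMod k) = ((t:ℤ) : ZMod k) := by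
      push_cast
      simp only [hadef, hbdef, htdef, ZMod.natCast_val, ZMod.cast_id, hxdef]
    obtain ⟨m, hm⟩ := (ZMod.intCast_eq_intCast_iff _ _ _).mp hcast |>.dvd
    set s : ℤ := (fa : ℤ) + fb with hsdef
    have hs : 2 * (k:ℤ) * s = 2 * (t:ℤ) * k' + 2 * k * ((-m) * k') + (2 * k - ea - eb) := by
      rw [hsdef]
      linear_combination hfa + hfb - 2 * (k':ℤ) * hm
    have htZ1 : (d:ℤ) ≤ (t:ℤ) := by exact_mod_cast ht1
    have htZ2 : (t:ℤ) ≤ (k:ℤ) - d := by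
      have : t + d ≤ k := by omega
      have := (by exact_mod_cast this : (t:ℤ) + d ≤ k)
      linarith
    obtain ⟨hu1, hu2⟩ := key_ineq k d k' d' t s (-m) (2 * k - ea - eb) hkZ hk'Z hdk htZ1 htZ2
      (by linarith) (by linarith) hs
    have hexpr : (fa : ZMod k') + (fb : ZMod k') = ((s : ℤ) : ZMod k') := by
      rw [hsdef]; push_cast; ring
    rw [hexpr]
    exact val_bound k' d' s (s - (-m) * k') (-m) hu1 hu2 hd' (by ring)
end

section
/- If a signed graph (G,σ) has a (k,d)-coloring with d odd, and k', d' are positive integers with k/d = k'/d', then (G,σ) has a (k',d')-coloring. -/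
variable {V : Type*}

private lemma keyDiff (g e p q k d a b : ℕ) (he : g = 2*e+1) (hp : k = g*p) (hq : d = g*q)
    (hlow : b + d ≤ a) (hhigh : a + d ≤ b + k) :
    q + (b+e)/g ≤ (a+e)/g ∧ (a+e)/g + q ≤ (b+e)/g + p := by
  have hgpos : 0 < g := by omega
  have ea := Nat.div_add_mod (a+e) g
  have eb := Nat.div_add_mod (b+e) g
  have hra : (a+e) % g < g := Nat.mod_lt _ hgpos
  have hrb : (b+e) % g < g := Nat.mod_lt _ hgpos
  set X := (a+e)/g with hX
  set Y := (b+e)/g with hY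
  set ra := (a+e)%g with hrA
  set rb := (b+e)%g with hrB
  constructor
  · by_contra hcon
    push_neg at hcon
    have h6 : X + 1 ≤ q + Y := hcon
    have h5 : g * X + g ≤ g * q + g * Y := by
      have := Nat.mul_le_mul (le_refl g) h6
      have e2 : g * (X + 1) = g * X + g := by ring
      have e3 : g * (q + Y) = g * q + g * Y := by ring
      omega
    linarith
  · by_contra hcon
    push_neg at hcon
    have h6 : Y + p + 1 ≤ X + q := hcon
    have h5 : g * Y + g * p + g ≤ g * X + g * q := by
      have := Nat.mul_le_mul (le_refl g) h6
      have e2 : g * (Y + p + 1) = g * Y + g * p + g := by ring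
      have e3 : g * (X + q) = g * X + g * q := by ring
      omega
    linarith

private lemma keySum (g e p k a : ℕ) (he : g = 2*e+1) (hpk : k = g*p) (ha : a ≤ k) :
    (a+e)/g + ((k-a)+e)/g = p := by
  have hgpos : 0 < g := by omega
  have ea := Nat.div_add_mod (a+e) g
  have ec := Nat.div_add_mod ((k-a)+e) g
  have hra : (a+e) % g < g := Nat.mod_lt _ hgpos
  have hrc : ((k-a)+e) % g < g := Nat.mod_lt _ hgpos
  have hsum : (a+e) + ((k-a)+e) = k + 2*e := by omega
  have hk2 : k + 2*e + 1 = g*p + g := by rw [hpk]; omega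
  set X := (a+e)/g with hX
  set Y := ((k-a)+e)/g with hY
  set ra := (a+e)%g with hrA
  set rc := ((k-a)+e)%g with hrC
  have hle : X + Y < p + 1 := by
    by_contra hcon
    push_neg at hcon
    have h5 : g * p + g ≤ g * X + g * Y := by
      have := Nat.mul_le_mul (le_refl g) hcon
      have e2 : g * (p + 1) = g * p + g := by ring
      have e3 : g * (X + Y) = g * X + g * Y := by ring
      omega
    linarith
  have hge : p ≤ X + Y := by
    by_contra hcon
    push_neg at hcon
    have h6 : X + Y + 1 ≤ p := hcon
    have h5 : g * X + g * Y + g ≤ g * p := by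
      have := Nat.mul_le_mul (le_refl g) h6
      have e2 : g * (X + Y + 1) = g * X + g * Y + g := by ring
      omega
    linarith
  omega

private lemma oddPhi (k k' g e p m : ℕ) (he : g = 2*e+1) (hp : k = g*p) (hk'm : k' = p*m)
    (hk0 : 0 < k) (hk'0 : 0 < k') (x : ZMod k) :
    ((m * (((-x).val + e)/g) : ℕ) : ZMod k') = -(((m * ((x.val + e)/g) : ℕ) : ZMod k') : ZMod k') := by
  haveI : NeZero k := ⟨hk0.ne'⟩
  haveI : NeZero k' := ⟨hk'0.ne'⟩
  by_cases hx : x = 0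
  · subst hx
    rw [neg_zero]
    have h0 : (ZMod.val (0 : ZMod k) + e)/g = 0 := by
      rw [ZMod.val_zero]
      apply Nat.div_eq_of_lt
      omega
    rw [h0, Nat.mul_zero, Nat.cast_zero, neg_zero]
  · have hv : (-x).val = k - x.val := by rw [ZMod.neg_val, if_neg hx]
    have hsum := keySum g e p k x.val he hp (le_of_lt (ZMod.val_lt x))
    rw [hv]
    have htot : m * ((k - x.val + e)/g) + m * ((x.val + e)/g) = k' := by
      rw [hk'm]
      calc m * ((k - x.val + e)/g) + m * ((x.val + e)/g)
          = m * (((x.val + e)/g) + ((k - x.val + e)/g)) := by ring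
        _ = m * p := by rw [hsum]
        _ = p * m := Nat.mul_comm m p
    have hcast : ((m * ((k - x.val + e)/g) : ℕ) : ZMod k') + ((m * ((x.val + e)/g) : ℕ) : ZMod k') = 0 := by
      rw [← Nat.cast_add, htot, ZMod.natCast_self]
    exact eq_neg_of_add_eq_zero_left hcast

private lemma mainStep (k k' g e p q m d d' : ℕ) (he : g = 2*e+1) (hp : k = g*p)
    (hq : d = g*q) (hm : d' = q*m) (hk'm : k' = p*m)
    (hd0 : 0 < d) (hd'0 : 0 < d') (hk0 : 0 < k) (hk'0 : 0 < k')
    (x y : ZMod k)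
    (hmin : d ≤ min (x - y).val (-(x - y)).val) :
    d' ≤ min (((m * ((x.val + e) / g) : ℕ) : ZMod k') - ((m * ((y.val + e) / g) : ℕ) : ZMod k')).val
           (-(((m * ((x.val + e) / g) : ℕ) : ZMod k') - ((m * ((y.val + e) / g) : ℕ) : ZMod k'))).val := by
  haveI : NeZero k := ⟨hk0.ne'⟩
  haveI : NeZero k' := ⟨hk'0.ne'⟩
  have main : ∀ a b : ℕ, a < k → b < k → b + d ≤ a → a + d ≤ b + k →
      d' ≤ min (((m * ((a + e) / g) : ℕ) : ZMod k') - ((m * ((b + e) / g) : ℕ) : ZMod k')).val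
             (-(((m * ((a + e) / g) : ℕ) : ZMod k') - ((m * ((b + e) / g) : ℕ) : ZMod k'))).val := by
    intro a b ha hb hlow hhigh
    obtain ⟨hF1, hF2⟩ := keyDiff g e p q k d a b he hp hq hlow hhigh
    set FA := (a+e)/g with hFA
    set FB := (b+e)/g with hFB
    have t1 : m * (q + FB) ≤ m * FA := Nat.mul_le_mul (le_refl m) hF1
    have t2 : m * (FA + q) ≤ m * (FB + p) := Nat.mul_le_mul (le_refl m) hF2
    have hA1 : d' + m * FB ≤ m * FA := by
      have e2 : m * (q + FB) = m * q + m * FB := by ring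
      have e3 : d' = m * q := by rw [hm]; ring
      omega
    have hA2 : m * FA + d' ≤ m * FB + k' := by
      have e2 : m * (FA + q) = m * FA + m * q := by ring
      have e3 : m * (FB + p) = m * FB + m * p := by ring
      have e4 : d' = m * q := by rw [hm]; ring
      have e5 : k' = m * p := by rw [hk'm]; ring
      omega
    set A := m * FA with hAdef
    set B := m * FB with hBdef
    have hBA : B ≤ A := by omega
    have hABk : A - B < k' := by omega
    have h1 : ((A : ℕ) : ZMod k') - ((B : ℕ) : ZMod k') = ((A - B : ℕ) : ZMod k') :=
      (Nat.cast_sub hBA).symm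
    rw [h1]
    have hv : ((A - B : ℕ) : ZMod k').val = A - B := by
      rw [ZMod.val_natCast, Nat.mod_eq_of_lt hABk]
    have hne : ((A - B : ℕ) : ZMod k') ≠ 0 := by
      intro h0
      rw [h0, ZMod.val_zero] at hv
      omega
    have hnv : (-((A - B : ℕ) : ZMod k')).val = k' - (A - B) := by
      rw [ZMod.neg_val, if_neg hne, hv]
    rw [hv, hnv]
    omega
  have hvx := ZMod.val_lt x
  have hvy := ZMod.val_lt y
  have hxyne : x - y ≠ 0 := by
    intro h0
    rw [h0, neg_zero, ZMod.val_zero] at hmin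
    simp at hmin
    omega
  obtain ⟨h1d, h2dd⟩ := le_min_iff.mp hmin
  have hneg : (-(x-y)).val = k - (x-y).val := by rw [ZMod.neg_val, if_neg hxyne]
  have hvxy := ZMod.val_lt (x - y)
  rw [hneg] at h2dd
  rcases le_or_gt y.val x.val with hba | hba
  · have hxy : x - y = ((x.val - y.val : ℕ) : ZMod k) := by
      rw [Nat.cast_sub hba]
      simp [ZMod.natCast_val, ZMod.cast_id]
    have ht : (x - y).val = x.val - y.val := by
      rw [hxy, ZMod.val_natCast, Nat.mod_eq_of_lt (by omega)]
    exact main x.val y.val hvx hvy (by omega) (by omega)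
  · have hyx : y - x = ((y.val - x.val : ℕ) : ZMod k) := by
      rw [Nat.cast_sub hba.le]
      simp [ZMod.natCast_val, ZMod.cast_id]
    have ht : (-(x - y)).val = y.val - x.val := by
      rw [neg_sub, hyx, ZMod.val_natCast, Nat.mod_eq_of_lt (by omega)]
    rw [hneg] at ht
    have happ := main y.val x.val hvy hvx (by omega) (by omega)
    have e1 : ((m * ((x.val + e) / g) : ℕ) : ZMod k') - ((m * ((y.val + e) / g) : ℕ) : ZMod k')
        = -(((m * ((y.val + e) / g) : ℕ) : ZMod k') - ((m * ((x.val + e) / g) : ℕ) : ZMod k')) := by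
      ring
    rw [e1, neg_neg, min_comm]
    exact happ

/-- If a signed graph has a `(k,d)`-coloring with `d` odd, and `k', d'` are positive
integers with `k/d = k'/d'`, then it has a `(k',d')`-coloring. -/
theorem hasColoring_equal_ratio_of_odd
    (G : SimpleGraph V) (σ : V → V → ℤ) (hσ : IsSignature G σ)
    (k d k' d' : ℕ) (hodd : Odd d) (hk' : 0 < k') (hd' : 0 < d')
    (heq : (k : ℝ) / d = (k' : ℝ) / d')
    (h : HasKDColoring G σ k d) :
    HasKDColoring G σ k' d' := by
  obtain ⟨hk0, hd0, h2d, c, hc⟩ := h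
  have hcross : k * d' = k' * d := by
    rw [div_eq_div_iff (by exact_mod_cast hd0.ne' : (d:ℝ) ≠ 0)
      (by exact_mod_cast hd'.ne' : (d':ℝ) ≠ 0)] at heq
    exact_mod_cast heq
  set g := Nat.gcd k d with hgdef
  have hgpos : 0 < g := Nat.gcd_pos_of_pos_left d hk0
  set p := k / g with hpdef
  set q := d / g with hqdef
  have hp : k = g * p := (Nat.mul_div_cancel' (Nat.gcd_dvd_left k d)).symm
  have hq : d = g * q := (Nat.mul_div_cancel' (Nat.gcd_dvd_right k d)).symm
  have hcop : Nat.Coprime p q := Nat.coprime_div_gcd_div_gcd hgpos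
  have hqpos : 0 < q := by
    rcases Nat.eq_zero_or_pos q with h0 | h0
    · rw [h0, Nat.mul_zero] at hq; omega
    · exact h0
  have hoddg : Odd g := (Nat.odd_mul.mp (hq ▸ hodd)).1
  have hg2 : g % 2 = 1 := Nat.odd_iff.mp hoddg
  set e := g / 2 with hedef
  have he : g = 2*e+1 := by omega
  have hpd' : p * d' = k' * q := by
    have h' : g * (p * d') = g * (k' * q) := by
      calc g * (p * d') = (g * p) * d' := by ring
        _ = k * d' := by rw [← hp]
        _ = k' * d := hcross
        _ = k' * (g * q) := by rw [← hq]
        _ = g * (k' * q) := by ring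
    exact Nat.eq_of_mul_eq_mul_left hgpos h'
  have hqd' : q ∣ d' := by
    have hdvd : q ∣ p * d' := ⟨k', by rw [hpd']; ring⟩
    exact Nat.Coprime.dvd_of_dvd_mul_left hcop.symm hdvd
  set m := d' / q with hmdef
  have hm : d' = q * m := (Nat.mul_div_cancel' hqd').symm
  have hk'm : k' = p * m := by
    have h' : k' * q = (p * m) * q := by
      calc k' * q = p * d' := hpd'.symm
        _ = p * (q * m) := by rw [← hm]
        _ = (p * m) * q := by ring
    exact Nat.eq_of_mul_eq_mul_right hqpos h'
  have h2q : 2*q ≤ p := by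
    have hgq : g * (2*q) ≤ g * p := by
      calc g * (2*q) = 2 * (g*q) := by ring
        _ = 2 * d := by rw [← hq]
        _ ≤ k := h2d
        _ = g * p := hp
    exact Nat.le_of_mul_le_mul_left hgq hgpos
  refine ⟨hk', hd', ?_, fun v => ((m * (((c v).val + e)/g) : ℕ) : ZMod k'), fun v w hadj => ?_⟩
  · calc 2 * d' = (2*q) * m := by rw [hm]; ring
      _ ≤ p * m := Nat.mul_le_mul h2q (le_refl m)
      _ = k' := hk'm.symm
  · dsimp only
    have hcvw := hc v w hadj
    rcases hσ.2 v w hadj with hs | hs <;> rw [hs] at hcvw ⊢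
    · simp only [Int.cast_one, one_mul] at hcvw ⊢
      exact mainStep k k' g e p q m d d' he hp hq hm hk'm hd0 hd' hk0 hk' (c v) (c w) hcvw
    · simp only [Int.cast_neg, Int.cast_one, neg_one_mul] at hcvw ⊢
      rw [← oddPhi k k' g e p m he hp hk'm hk0 hk' (c w)]
      exact mainStep k k' g e p q m d d' he hp hq hm hk'm hd0 hd' hk0 hk' (c v) (-(c w)) hcvw
end

section
/- For every signed graph (G,σ) that admits at least one (k,d)-coloring, χ((G,σ)) − 1 ≤ χ_c((G,σ)) ≤ χ((G,σ)). -/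
variable {V : Type*}

/- ### Auxiliary lemmas -/

private lemma emod_shift (a n : ℤ) : (a + n) % n = a % n := by
  simpa using Int.add_mul_emod_self_left (a := a) (b := n) (c := 1)

/-- Basic bounds for `F x = (2qx+k)/(2k)`. -/
private lemma Fb (k q x : ℕ) (hk : 0 < k) (hq : 0 < q) (hx : x < k) :
    2*k*((2*q*x + k)/(2*k)) ≤ 2*q*x + k ∧
    2*q*x + k < 2*k*((2*q*x + k)/(2*k)) + 2*k ∧
    (2*q*x + k)/(2*k) ≤ q := by
  have h2k : 0 < 2*k := by omega
  have h1 := Nat.div_add_mod (2*q*x + k) (2*k)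
  have h2 := Nat.mod_lt (2*q*x + k) h2k
  refine ⟨by omega, by omega, ?_⟩
  have hqx : 2*q*x < 2*q*k := (Nat.mul_lt_mul_left (by omega)).2 hx
  have hlt : 2*q*x + k < (q+1)*(2*k) := by nlinarith
  have := (Nat.div_lt_iff_lt_mul h2k).2 hlt
  omega

private lemma key1 (k d q x y Fx Fy : ℕ) (hk : 0 < k) (hq : 2 ≤ q) (hd : 0 < d)
    (hkd : k < q * d) (hx : x < k) (hy : y < k)
    (bx1 : 2*k*Fx ≤ 2*q*x + k) (bx2 : 2*q*x + k < 2*k*Fx + 2*k) (bx3 : Fx ≤ q)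
    (by1 : 2*k*Fy ≤ 2*q*y + k) (by2 : 2*q*y + k < 2*k*Fy + 2*k) (by3 : Fy ≤ q)
    (hmod : Fx % q = Fy % q) :
    ((x:ℤ) - y) % k < d ∨ ((y:ℤ) - x) % k < d := by
  have hcase : Fx = Fy ∨ (Fx = q ∧ Fy = 0) ∨ (Fx = 0 ∧ Fy = q) := by
    rcases Nat.lt_or_ge Fx q with h1 | h1
    · rcases Nat.lt_or_ge Fy q with h2 | h2
      · left; rwa [Nat.mod_eq_of_lt h1, Nat.mod_eq_of_lt h2] at hmod
      · have hFyq : Fy = q := le_antisymm by3 h2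
        refine Or.inr (Or.inr ⟨?_, hFyq⟩)
        rw [hFyq, Nat.mod_self, Nat.mod_eq_of_lt h1] at hmod; exact hmod
    · have hFxq : Fx = q := le_antisymm bx3 h1
      rcases Nat.lt_or_ge Fy q with h2 | h2
      · refine Or.inr (Or.inl ⟨hFxq, ?_⟩)
        rw [hFxq, Nat.mod_self, Nat.mod_eq_of_lt h2] at hmod; exact hmod.symm
      · left; rw [hFxq, le_antisymm by3 h2]
  have hKD : (k:ℤ) < (q:ℤ)*d := by exact_mod_cast hkd
  have hQ2 : (2:ℤ) ≤ q := by exact_mod_cast hq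
  have hkq2 : (k:ℤ)*2 ≤ (k:ℤ)*q := mul_le_mul_of_nonneg_left hQ2 (by positivity)
  have hdivq : ∀ A B : ℤ, (q:ℤ)*A < (q:ℤ)*B → A < B := fun A B h =>
    lt_of_mul_lt_mul_left h (by positivity)
  rcases hcase with hEq | ⟨hX, hY⟩ | ⟨hX, hY⟩
  · -- same fiber: |x - y| < d
    subst hEq
    have Bx1 : 2*(k:ℤ)*Fx ≤ 2*(q:ℤ)*x + k := by exact_mod_cast bx1
    have Bx2 : 2*(q:ℤ)*x + k < 2*(k:ℤ)*Fx + 2*k := by exact_mod_cast bx2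
    have By1 : 2*(k:ℤ)*Fx ≤ 2*(q:ℤ)*y + k := by exact_mod_cast by1
    have By2 : 2*(q:ℤ)*y + k < 2*(k:ℤ)*Fx + 2*k := by exact_mod_cast by2
    have h1' := hdivq ((x:ℤ) - y) d (by push_cast; linarith)
    have h2' := hdivq ((y:ℤ) - x) d (by push_cast; linarith)
    rcases le_total (y:ℤ) x with hxy | hxy
    · left
      rw [Int.emod_eq_of_lt (by omega) (by omega)]; omega
    · right
      rw [Int.emod_eq_of_lt (by omega) (by omega)]; omega
  · -- Fx = q, Fy = 0 : wrap-around, y - x + k < d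
    rw [hX] at bx1
    rw [hY] at by2
    have Bx1 : 2*(k:ℤ)*q ≤ 2*(q:ℤ)*x + k := by exact_mod_cast bx1
    have By2 : 2*(q:ℤ)*y + k < 2*k := by
      have h0 : 2*(q:ℤ)*y + k < 2*(k:ℤ)*0 + 2*k := by exact_mod_cast by2
      linarith
    have h1' := hdivq ((y:ℤ) - x + k) d (by push_cast; linarith)
    have hlt := hdivq 0 ((x:ℤ) - y) (by push_cast; linarith)
    right
    rw [show ((y:ℤ) - x) % k = ((y:ℤ) - x + k) % k from (emod_shift _ _).symm,
      Int.emod_eq_of_lt (by omega) (by omega)]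
    omega
  · -- Fx = 0, Fy = q : wrap-around, x - y + k < d
    rw [hY] at by1
    rw [hX] at bx2
    have By1 : 2*(k:ℤ)*q ≤ 2*(q:ℤ)*y + k := by exact_mod_cast by1
    have Bx2 : 2*(q:ℤ)*x + k < 2*k := by
      have h0 : 2*(q:ℤ)*x + k < 2*(k:ℤ)*0 + 2*k := by exact_mod_cast bx2
      linarith
    have h1' := hdivq ((x:ℤ) - y + k) d (by push_cast; linarith)
    have hlt := hdivq 0 ((y:ℤ) - x) (by push_cast; linarith)
    left
    rw [show ((x:ℤ) - y) % k = ((x:ℤ) - y + k) % k from (emod_shift _ _).symm,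
      Int.emod_eq_of_lt (by omega) (by omega)]
    omega

private lemma key2 (k d q x y Fx Fy : ℕ) (hk : 0 < k) (hq : 2 ≤ q) (hd : 0 < d)
    (h2d : 2*d ≤ k) (hkd : k < q * d) (hx : x < k) (hy : y < k)
    (bx1 : 2*k*Fx ≤ 2*q*x + k) (bx2 : 2*q*x + k < 2*k*Fx + 2*k) (bx3 : Fx ≤ q)
    (by1 : 2*k*Fy ≤ 2*q*y + k) (by2 : 2*q*y + k < 2*k*Fy + 2*k) (by3 : Fy ≤ q)
    (hdvd : q ∣ Fx + Fy) :
    ((x:ℤ) + y) % k < d ∨ (-(x:ℤ) - y) % k < d := by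
  have hKD : (k:ℤ) < (q:ℤ)*d := by exact_mod_cast hkd
  have hQ2 : (2:ℤ) ≤ q := by exact_mod_cast hq
  have hdivq : ∀ A B : ℤ, (q:ℤ)*A < (q:ℤ)*B → A < B := fun A B h =>
    lt_of_mul_lt_mul_left h (by positivity)
  obtain ⟨m, hm⟩ := hdvd
  have hm2 : m ≤ 2 := by
    by_contra hm3
    have : q * 3 ≤ q * m := Nat.mul_le_mul_left q (by omega)
    omega
  have hcase : (Fx = 0 ∧ Fy = 0) ∨ Fx + Fy = q ∨ (Fx = q ∧ Fy = q) := by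
    rcases (by omega : m = 0 ∨ m = 1 ∨ m = 2) with rfl | rfl | rfl
    · left; omega
    · right; left; omega
    · right; right; omega
  rcases hcase with ⟨hX, hY⟩ | hS | ⟨hX, hY⟩
  · -- Fx = Fy = 0 : x + y < d
    rw [hX] at bx2
    rw [hY] at by2
    have Bx2 : 2*(q:ℤ)*x + k < 2*k := by
      have : 2*(q:ℤ)*x + k < 2*(k:ℤ)*0 + 2*k := by exact_mod_cast bx2
      linarith
    have By2 : 2*(q:ℤ)*y + k < 2*k := by
      have : 2*(q:ℤ)*y + k < 2*(k:ℤ)*0 + 2*k := by exact_mod_cast by2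
      linarith
    have h1' := hdivq ((x:ℤ) + y) d (by push_cast; linarith)
    left
    rw [Int.emod_eq_of_lt (by omega) (by omega)]; omega
  · -- Fx + Fy = q : k - d < x + y < k + d
    have Bx1 : 2*(k:ℤ)*Fx ≤ 2*(q:ℤ)*x + k := by exact_mod_cast bx1
    have Bx2 : 2*(q:ℤ)*x + k < 2*(k:ℤ)*Fx + 2*k := by exact_mod_cast bx2
    have By1 : 2*(k:ℤ)*Fy ≤ 2*(q:ℤ)*y + k := by exact_mod_cast by1
    have By2 : 2*(q:ℤ)*y + k < 2*(k:ℤ)*Fy + 2*k := by exact_mod_cast by2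
    have hSZ : (Fx:ℤ) + Fy = q := by exact_mod_cast hS
    have hSk : 2*(k:ℤ)*Fx + 2*(k:ℤ)*Fy = 2*(k:ℤ)*q := by linear_combination 2*(k:ℤ)*hSZ
    have h1' := hdivq ((x:ℤ) + y) ((k:ℤ) + d) (by push_cast; linarith)
    have h2' := hdivq ((k:ℤ) - d) ((x:ℤ) + y) (by push_cast; linarith)
    rcases le_or_gt (k:ℤ) ((x:ℤ) + y) with hc | hc
    · left
      rw [show ((x:ℤ) + y) = ((x:ℤ) + y - k) + k by ring, emod_shift,
        Int.emod_eq_of_lt (by omega) (by omega)]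
      omega
    · right
      rw [show (-(x:ℤ) - y) % k = (-(x:ℤ) - y + k) % k from (emod_shift _ _).symm,
        Int.emod_eq_of_lt (by omega) (by omega)]
      omega
  · -- Fx = Fy = q : 2k - d < x + y < 2k
    rw [hX] at bx1
    rw [hY] at by1
    have Bx1 : 2*(k:ℤ)*q ≤ 2*(q:ℤ)*x + k := by exact_mod_cast bx1
    have By1 : 2*(k:ℤ)*q ≤ 2*(q:ℤ)*y + k := by exact_mod_cast by1
    have h1' := hdivq (2*(k:ℤ) - x - y) d (by push_cast; linarith)
    right
    have e1 : ((-(x:ℤ) - y) + k + k) % k = (-(x:ℤ) - y) % k := by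
      rw [emod_shift, emod_shift]
    rw [← e1, show (-(x:ℤ) - y) + k + k = 2*(k:ℤ) - x - y by ring,
      Int.emod_eq_of_lt (by omega) (by omega)]
    omega

/-- A `(k,d)`-coloring with `d ≥ 1` is in particular a `(k,1)`-coloring. -/
private lemma hasK1 (G : SimpleGraph V) (σ : V → V → ℤ) (k d : ℕ)
    (h : HasKDColoring G σ k d) : HasKDColoring G σ k 1 := by
  obtain ⟨hk, hd, h2d, c, hc⟩ := h
  exact ⟨hk, one_pos, by omega, c, fun v w hvw => le_trans (by omega) (hc v w hvw)⟩

/-- The key construction: a `(k,d)`-coloring yields a `(⌊k/d⌋+1, 1)`-coloring. -/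
private lemma hasQ1 (G : SimpleGraph V) (σ : V → V → ℤ) (hσ : IsSignature G σ) (k d : ℕ)
    (h : HasKDColoring G σ k d) : HasKDColoring G σ (k / d + 1) 1 := by
  obtain ⟨hk, hd, h2d, c, hc⟩ := h
  set q := k / d + 1 with hqdef
  haveI : NeZero k := ⟨hk.ne'⟩
  have hq2 : 2 ≤ q := by
    have h0 : 2 ≤ k / d := (Nat.le_div_iff_mul_le hd).2 (by omega)
    rw [hqdef]
    exact Nat.le_succ_of_le h0
  haveI : NeZero q := ⟨by omega⟩
  have hkd : k < q * d := by
    have h1 := Nat.div_add_mod k d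
    have h2 := Nat.mod_lt k hd
    have h3 : k < d * (k / d) + d := by linarith
    rw [hqdef]
    calc k < d * (k / d) + d := h3
    _ = (k / d + 1) * d := by ring
  refine ⟨by omega, one_pos, by omega, fun v => ((2*q*(c v).val + k)/(2*k) : ℕ), ?_⟩
  intro v w hvw
  set x := (c v).val with hxdef
  set y := (c w).val with hydef
  have hx : x < k := ZMod.val_lt _
  have hy : y < k := ZMod.val_lt _
  obtain ⟨bx1, bx2, bx3⟩ := Fb k q x hk (by omega) hx
  obtain ⟨by1, by2, by3⟩ := Fb k q y hk (by omega) hy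
  have hcvw := hc v w hvw
  have reduce : ∀ u : ZMod q, u ≠ 0 → 1 ≤ min (ZMod.val u) (ZMod.val (-u)) := by
    intro u hu
    have h1 : u.val ≠ 0 := fun h0 => hu ((ZMod.val_eq_zero u).1 h0)
    have h2 : (-u).val ≠ 0 := fun h0 => (neg_ne_zero.2 hu) ((ZMod.val_eq_zero (-u)).1 h0)
    omega
  rcases hσ.2 v w hvw with hs | hs
  · -- positive edge
    rw [hs] at hcvw ⊢
    simp only [Int.cast_one, one_mul] at hcvw ⊢
    apply reduce
    intro heq
    have heq' : (((2*q*x + k)/(2*k) : ℕ) : ZMod q) = (((2*q*y + k)/(2*k) : ℕ) : ZMod q) :=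
      sub_eq_zero.1 heq
    have hmod := (ZMod.natCast_eq_natCast_iff' _ _ _).1 heq'
    have hdisj := key1 k d q x y _ _ hk hq2 hd hkd hx hy bx1 bx2 bx3 by1 by2 by3 hmod
    have e0 : c v - c w = ((((x:ℤ) - y) : ℤ) : ZMod k) := by
      push_cast
      rw [ZMod.natCast_val, ZMod.natCast_val, ZMod.cast_id, ZMod.cast_id]
    have e1 : ((c v - c w).val : ℤ) = ((x:ℤ) - y) % k := by
      rw [e0, ZMod.val_intCast]
    have e2 : ((-(c v - c w)).val : ℤ) = ((y:ℤ) - x) % k := by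
      rw [show -(c v - c w) = ((((y:ℤ) - x) : ℤ) : ZMod k) by
          push_cast
          rw [ZMod.natCast_val, ZMod.natCast_val, ZMod.cast_id, ZMod.cast_id]
          ring,
        ZMod.val_intCast]
    have hd1 : (d:ℤ) ≤ ((x:ℤ) - y) % k := by
      rw [← e1]; exact_mod_cast (le_min_iff.1 hcvw).1
    have hd2 : (d:ℤ) ≤ ((y:ℤ) - x) % k := by
      rw [← e2]; exact_mod_cast (le_min_iff.1 hcvw).2
    omega
  · -- negative edge
    rw [hs] at hcvw ⊢
    simp only [Int.cast_neg, Int.cast_one, neg_one_mul, sub_neg_eq_add] at hcvw ⊢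
    apply reduce
    intro heq
    have heq' : (((2*q*x + k)/(2*k) + (2*q*y + k)/(2*k) : ℕ) : ZMod q) = 0 := by
      push_cast
      linear_combination heq
    have hdvd := (ZMod.natCast_eq_zero_iff _ _).1 heq'
    have hdisj := key2 k d q x y _ _ hk hq2 hd h2d hkd hx hy bx1 bx2 bx3 by1 by2 by3 hdvd
    have e0 : c v + c w = ((((x:ℤ) + y) : ℤ) : ZMod k) := by
      push_cast
      rw [ZMod.natCast_val, ZMod.natCast_val, ZMod.cast_id, ZMod.cast_id]
    have e1 : ((c v + c w).val : ℤ) = ((x:ℤ) + y) % k := by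
      rw [e0, ZMod.val_intCast]
    have e2 : ((-(c v + c w)).val : ℤ) = (-(x:ℤ) - y) % k := by
      rw [show -(c v + c w) = (((-(x:ℤ) - y) : ℤ) : ZMod k) by
          push_cast
          rw [ZMod.natCast_val, ZMod.natCast_val, ZMod.cast_id, ZMod.cast_id]
          ring,
        ZMod.val_intCast]
    have hd1 : (d:ℤ) ≤ ((x:ℤ) + y) % k := by
      rw [← e1]; exact_mod_cast (le_min_iff.1 hcvw).1
    have hd2 : (d:ℤ) ≤ (-(x:ℤ) - y) % k := by
      rw [← e2]; exact_mod_cast (le_min_iff.1 hcvw).2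
    omega

/-- For every signed graph admitting at least one `(k,d)`-coloring,
`χ((G,σ)) - 1 ≤ χ_c((G,σ)) ≤ χ((G,σ))`. -/
theorem chi_sub_one_le_chiC_le_chi
    (G : SimpleGraph V) (σ : V → V → ℤ) (hσ : IsSignature G σ)
    (k d : ℕ) (h : HasKDColoring G σ k d) :
    (chi G σ : ℝ) - 1 ≤ chiC G σ ∧ chiC G σ ≤ (chi G σ : ℝ) := by
  have hSne : { n : ℕ | HasKDColoring G σ n 1 }.Nonempty := ⟨k, hasK1 G σ k d h⟩
  have hchi_mem : HasKDColoring G σ (chi G σ) 1 := Nat.sInf_mem hSne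
  have hTmem : (chi G σ : ℝ) ∈ { r : ℝ | ∃ k d : ℕ, HasKDColoring G σ k d ∧ r = (k : ℝ) / d } :=
    ⟨chi G σ, 1, hchi_mem, by norm_num⟩
  have hTne : { r : ℝ | ∃ k d : ℕ, HasKDColoring G σ k d ∧ r = (k : ℝ) / d }.Nonempty :=
    ⟨_, hTmem⟩
  have hTbdd : BddBelow { r : ℝ | ∃ k d : ℕ, HasKDColoring G σ k d ∧ r = (k : ℝ) / d } := by
    refine ⟨0, fun r hr => ?_⟩
    obtain ⟨k', d', _, rfl⟩ := hr
    positivity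
  constructor
  · -- lower bound
    apply le_csInf hTne
    rintro r ⟨k', d', h', rfl⟩
    have hq1 : HasKDColoring G σ (k' / d' + 1) 1 := hasQ1 G σ hσ k' d' h'
    have hle : chi G σ ≤ k' / d' + 1 := Nat.sInf_le hq1
    have hcast : ((k' / d' : ℕ) : ℝ) ≤ (k' : ℝ) / d' := Nat.cast_div_le
    have hle' : (chi G σ : ℝ) ≤ ((k' / d' : ℕ) : ℝ) + 1 := by exact_mod_cast hle
    linarith
  · -- upper bound
    exact csInf_le hTbdd hTmem
end

section
/- Let (G,σ) be a signed graph with χ((G,σ)) = t + 1. Then χ_c((G,σ)) = t if and only if (G,σ) has a (2t, 2)-coloring. -/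
/-!
Think of a `(k, d)`-coloring as a map to `ℝ / (k/d)ℤ` that keeps `c v` and `σ(vw) c w` at
circular distance at least `1` on every edge. If `χ_c = t`, such real colorings exist for every
modulus above `t`; compactness of `[0,1]^V` then gives one of modulus exactly `t`. The map
`x ↦ ⌊x⌋ + ⌈x⌉` is odd and monotone, and it adds `2` when `x` increases by `1`, so it sends
a real coloring of modulus `t` to a `(2t, 2)`-coloring. Conversely, rounding a coloring of
modulus `k/d < t` gives a `(t, 1)`-coloring, which `χ = t + 1` rules out.
-/

variable {V : Type*}

section FloorAddCeil

variable {α : Type*} [CommRing α] [LinearOrder α] [FloorRing α]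

def floorAddCeil (x : α) : ℤ := ⌊x⌋ + ⌈x⌉

lemma floorAddCeil_mono : Monotone (floorAddCeil : α → ℤ) :=
  fun _ _ h => add_le_add (Int.floor_mono h) (Int.ceil_mono h)

variable [IsStrictOrderedRing α]

lemma floorAddCeil_add_intCast (x : α) (n : ℤ) :
    floorAddCeil (x + n) = floorAddCeil x + 2 * n := by
  simp only [floorAddCeil, Int.floor_add_intCast, Int.ceil_add_intCast]; ring

lemma floorAddCeil_intCast_mul {ε : ℤ} (hε : ε = 1 ∨ ε = -1) (x : α) :
    floorAddCeil ((ε : α) * x) = ε * floorAddCeil x := by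
  rcases hε with rfl | rfl
  · simp
  · simp only [floorAddCeil, Int.cast_neg, Int.cast_one, neg_one_mul, Int.floor_neg, Int.ceil_neg]
    ring

lemma floorAddCeil_add_two_le {x y : α} (h : x + 1 ≤ y) :
    floorAddCeil x + 2 ≤ floorAddCeil y := by
  have := floorAddCeil_mono h
  rwa [← Int.cast_one, floorAddCeil_add_intCast, mul_one] at this

lemma two_le_abs_floorAddCeil_sub {x y : α} (h : 1 ≤ |x - y|) :
    2 ≤ |floorAddCeil x - floorAddCeil y| := by
  rcases le_abs'.mp h with h | h
  · have := floorAddCeil_add_two_le (show x + 1 ≤ y by linarith)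
    exact le_abs'.mpr (Or.inl (by linarith))
  · have := floorAddCeil_add_two_le (show y + 1 ≤ x by linarith)
    exact le_abs'.mpr (Or.inr (by linarith))

end FloorAddCeil

lemma min_val_intCast_le_natAbs {k : ℕ} (M : ℤ) :
    min (M : ZMod k).val (-(M : ZMod k)).val ≤ M.natAbs := by
  obtain ⟨n, rfl | rfl⟩ : ∃ n : ℕ, M = n ∨ M = -n := ⟨M.natAbs, Int.natAbs_eq M⟩
  · simpa [ZMod.val_natCast] using min_le_of_left_le (Nat.mod_le n k)
  · simpa [ZMod.val_natCast] using min_le_of_right_le (Nat.mod_le n k)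

lemma le_min_val_intCast_iff {k : ℕ} [NeZero k] {d : ℕ} {N : ℤ} :
    d ≤ min (N : ZMod k).val (-(N : ZMod k)).val ↔ ∀ j : ℤ, (d : ℤ) ≤ |N - k * j| := by
  have val_eq (M : ℤ) : ((M : ZMod k).val : ℤ) = |M - k * (M / k)| := by
    rw [ZMod.val_intCast, ← Int.emod_def,
      abs_of_nonneg (Int.emod_nonneg _ (by exact_mod_cast NeZero.ne k))]
  constructor
  · intro h j
    have hle := min_val_intCast_le_natAbs (k := k) (N - k * j)
    rw [show ((N - k * j : ℤ) : ZMod k) = N by simp] at hle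
    rw [Int.abs_eq_natAbs]; exact_mod_cast h.trans hle
  · intro h
    rw [le_min_iff, ← Int.cast_neg, ← Nat.cast_le (α := ℤ), ← Nat.cast_le (α := ℤ), val_eq, val_eq]
    have h' := h (-(-N / k))
    rw [show N - k * -(-N / k) = -(-N - k * (-N / k)) by ring, abs_neg] at h'
    exact ⟨h _, h'⟩

/-- The real analogue of a `(k, d)`-coloring, with `ℤ_k` replaced by `ℝ / pℤ` and `d` by `r`. -/
def IsCircularColoring (G : SimpleGraph V) (σ : V → V → ℤ) (p r : ℝ) (g : V → ℝ) : Prop :=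
  ∀ v w, G.Adj v w → ∀ j : ℤ, r ≤ |g v - σ v w * g w - p * j|

section SignedColorings

variable {G : SimpleGraph V} {σ : V → V → ℤ}

lemma isKDColoring_intCast_iff {k d : ℕ} [NeZero k] {h : V → ℤ} :
    IsKDColoring G σ k d (fun v => (h v : ZMod k)) ↔
      ∀ v w, G.Adj v w → ∀ j : ℤ, (d : ℤ) ≤ |h v - σ v w * h w - k * j| := by
  refine forall₂_congr fun v w => forall_congr' fun _ => ?_
  rw [← le_min_val_intCast_iff]
  push_cast
  rfl

namespace IsCircularColoring

variable {p r : ℝ} {g : V → ℝ}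

lemma of_isKDColoring {k d : ℕ} [NeZero k] {c : V → ZMod k} (hc : IsKDColoring G σ k d c) :
    IsCircularColoring G σ k d (fun v => (c v).val) := by
  have hcast : c = fun v => (((c v).val : ℤ) : ZMod k) := by ext v; simp
  rw [hcast, isKDColoring_intCast_iff] at hc
  intro v w hvw j
  beta_reduce
  exact_mod_cast hc v w hvw j

lemma mono (hg : IsCircularColoring G σ p r g) {r' : ℝ} (h : r' ≤ r) :
    IsCircularColoring G σ p r' g :=
  fun v w hvw j => h.trans (hg v w hvw j)

lemma const_mul (hg : IsCircularColoring G σ p r g) {a : ℝ} (ha : 0 ≤ a) :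
    IsCircularColoring G σ (a * p) (a * r) (fun v => a * g v) := fun v w hvw j =>
  calc a * r ≤ |a| * |g v - σ v w * g w - p * j| := by
        rw [abs_of_nonneg ha]; exact mul_le_mul_of_nonneg_left (hg v w hvw j) ha
    _ = |a * g v - σ v w * (a * g w) - a * p * j| := by rw [← abs_mul]; ring_nf

lemma isKDColoring_round (hσ : IsSignature G σ) {k d : ℕ} [NeZero k]
    (hg : IsCircularColoring G σ k r g) (hr : (d : ℝ) < r) :
    IsKDColoring G σ k d (fun v => (round (g v) : ZMod k)) := by
  rw [isKDColoring_intCast_iff]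
  intro v w hvw j
  have hσ1 : |(σ v w : ℝ)| = 1 := by rcases hσ.2 v w hvw with h | h <;> simp [h]
  have herr : |((round (g v) - σ v w * round (g w) - k * j : ℤ) : ℝ)
      - (g v - σ v w * g w - k * j)| ≤ 1 := by
    have hv := abs_sub_round (g v)
    have hw := abs_sub_round (g w)
    push_cast
    calc _ = |(g v - round (g v)) - σ v w * (g w - round (g w))| := by rw [← abs_neg]; ring_nf
      _ ≤ |g v - round (g v)| + |(σ v w : ℝ)| * |g w - round (g w)| := by
          rw [← abs_mul]; exact abs_sub _ _
      _ ≤ 1 := by rw [hσ1]; linarith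
  have hlt : ((d : ℤ) : ℝ) - 1 < ((|round (g v) - σ v w * round (g w) - k * j| : ℤ) : ℝ) := by
    have := abs_sub_abs_le_abs_sub (g v - σ v w * g w - k * j)
      ((round (g v) - σ v w * round (g w) - k * j : ℤ) : ℝ)
    rw [abs_sub_comm] at herr
    push_cast at this herr ⊢
    linarith [hg v w hvw j]
  have : (d : ℤ) - 1 < |round (g v) - σ v w * round (g w) - k * j| := by exact_mod_cast hlt
  omega

lemma isKDColoring_floorAddCeil (hσ : IsSignature G σ) {t : ℕ} [NeZero t]
    (hg : IsCircularColoring G σ t 1 g) :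
    IsKDColoring G σ (2 * t) 2 (fun v => (floorAddCeil (g v) : ZMod (2 * t))) := by
  rw [isKDColoring_intCast_iff]
  intro v w hvw j
  have hshift : floorAddCeil (g v) - σ v w * floorAddCeil (g w) - (2 * t : ℕ) * j =
      floorAddCeil (g v) - floorAddCeil ((σ v w : ℝ) * g w + ((t * j : ℤ) : ℝ)) := by
    rw [floorAddCeil_add_intCast, floorAddCeil_intCast_mul (hσ.2 v w hvw)]
    push_cast; ring
  rw [hshift]
  have hdist := hg v w hvw j
  rw [show g v - σ v w * g w - t * j = g v - ((σ v w : ℝ) * g w + ((t * j : ℤ) : ℝ)) by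
    push_cast; ring] at hdist
  exact two_le_abs_floorAddCeil_sub hdist

end IsCircularColoring

lemma isClosed_setOf_isCircularColoring (p r : ℝ) :
    IsClosed {g : V → ℝ | IsCircularColoring G σ p r g} := by
  simp only [IsCircularColoring, Set.ofPred_forall]
  exact isClosed_iInter fun v => isClosed_iInter fun w => isClosed_iInter fun _ =>
    isClosed_iInter fun j => isClosed_le continuous_const (by fun_prop)

lemma exists_isCircularColoring_of_forall_lt {K : Set (V → ℝ)} (hK : IsCompact K) {p r₀ : ℝ}
    (h : ∀ r < r₀, ∃ g ∈ K, IsCircularColoring G σ p r g) :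
    ∃ g ∈ K, IsCircularColoring G σ p r₀ g := by
  let S : Set.Iio r₀ → Set (V → ℝ) := fun r => K ∩ {g | IsCircularColoring G σ p r g}
  have : Nonempty (Set.Iio r₀) := ⟨⟨r₀ - 1, by simp⟩⟩
  obtain ⟨g, hg⟩ := IsCompact.nonempty_iInter_of_directed_nonempty_isCompact_isClosed S
    (Antitone.directed_ge fun r r' hrr' g hg => ⟨hg.1, hg.2.mono hrr'⟩)
    (fun r => h r r.2)
    (fun r => hK.inter_right (isClosed_setOf_isCircularColoring _ _))
    (fun r => hK.isClosed.inter (isClosed_setOf_isCircularColoring _ _))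
  have hmem := Set.mem_iInter.mp hg
  exact ⟨g, (hmem (Classical.arbitrary _)).1, fun v w hvw j =>
    le_of_forall_lt_imp_le_of_dense fun r hr => (hmem ⟨r, hr⟩).2 v w hvw j⟩

lemma HasKDColoring.two_le_div {k d : ℕ} (h : HasKDColoring G σ k d) : (2 : ℝ) ≤ k / d := by
  rw [le_div_iff₀ (by exact_mod_cast h.2.1)]
  exact_mod_cast h.2.2.1

lemma chiC_le {k d : ℕ} (h : HasKDColoring G σ k d) : chiC G σ ≤ k / d :=
  csInf_le ⟨0, by rintro _ ⟨k, d, -, rfl⟩; positivity⟩ ⟨k, d, h, rfl⟩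

lemma le_chiC (hne : ∃ k d, HasKDColoring G σ k d) {r : ℝ}
    (h : ∀ k d, HasKDColoring G σ k d → r ≤ k / d) : r ≤ chiC G σ := by
  obtain ⟨k, d, hkd⟩ := hne
  exact le_csInf ⟨_, k, d, hkd, rfl⟩ (by rintro _ ⟨k, d, hkd, rfl⟩; exact h k d hkd)

lemma exists_lt_of_chiC_lt (hne : ∃ k d, HasKDColoring G σ k d) {r : ℝ} (h : chiC G σ < r) :
    ∃ k d, HasKDColoring G σ k d ∧ (k : ℝ) / d < r := by
  obtain ⟨k, d, hkd⟩ := hne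
  obtain ⟨_, ⟨k, d, hkd, rfl⟩, hlt⟩ :=
    exists_lt_of_csInf_lt (s := {r | ∃ k d : ℕ, HasKDColoring G σ k d ∧ r = (k : ℝ) / d})
      ⟨_, k, d, hkd, rfl⟩ h
  exact ⟨k, d, hkd, hlt⟩

lemma two_le_chiC (hne : ∃ k d, HasKDColoring G σ k d) : 2 ≤ chiC G σ :=
  le_chiC hne fun _ _ h => h.two_le_div

lemma hasKDColoring_chi (h : 0 < chi G σ) : HasKDColoring G σ (chi G σ) 1 :=
  Nat.sInf_mem (Nat.nonempty_of_pos_sInf h)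

lemma not_hasKDColoring_of_lt_chi {k : ℕ} (h : k < chi G σ) : ¬ HasKDColoring G σ k 1 :=
  Nat.notMem_of_lt_sInf h

lemma HasKDColoring.of_div_lt (hσ : IsSignature G σ) {k d k' d' : ℕ} (h : HasKDColoring G σ k d)
    (hd' : 0 < d') (hkd' : 2 * d' ≤ k') (hlt : (k : ℝ) / d < k' / d') :
    HasKDColoring G σ k' d' := by
  obtain ⟨hk, hd, -, c, hc⟩ := h
  have : NeZero k := ⟨hk.ne'⟩
  have : NeZero k' := ⟨by omega⟩
  have hkR : (0 : ℝ) < k := by exact_mod_cast hk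
  have hg := (IsCircularColoring.of_isKDColoring hc).const_mul (a := k' / k) (by positivity)
  rw [div_mul_cancel₀ _ hkR.ne'] at hg
  refine ⟨by omega, hd', hkd', _, hg.isKDColoring_round hσ ?_⟩
  rw [div_lt_div_iff₀ (by positivity) (by exact_mod_cast hd')] at hlt
  rw [div_mul_eq_mul_div, lt_div_iff₀ hkR]
  linarith

lemma HasKDColoring.exists_isCircularColoring {k d : ℕ} (h : HasKDColoring G σ k d) :
    ∃ g ∈ Set.univ.pi fun _ => Set.Icc (0 : ℝ) 1, IsCircularColoring G σ 1 (d / k) g := by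
  obtain ⟨hk, -, -, c, hc⟩ := h
  have : NeZero k := ⟨hk.ne'⟩
  have hkR : (0 : ℝ) < k := by exact_mod_cast hk
  have hg := (IsCircularColoring.of_isKDColoring hc).const_mul (inv_nonneg.mpr hkR.le)
  rw [inv_mul_cancel₀ hkR.ne', inv_mul_eq_div] at hg
  refine ⟨_, fun v _ => ⟨by positivity, ?_⟩, hg⟩
  rw [inv_mul_le_one₀ hkR]
  exact_mod_cast (ZMod.val_lt (c v)).le

lemma exists_isCircularColoring_chiC (hne : ∃ k d, HasKDColoring G σ k d) :
    ∃ g, IsCircularColoring G σ (chiC G σ) 1 g := by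
  have hpos : 0 < chiC G σ := by linarith [two_le_chiC hne]
  obtain ⟨g, -, hg⟩ := exists_isCircularColoring_of_forall_lt
    (isCompact_univ_pi fun _ => isCompact_Icc (a := (0 : ℝ)) (b := 1)) (p := 1)
    (r₀ := (chiC G σ)⁻¹) fun r hr => by
      rcases le_or_gt r 0 with hr0 | hr0
      · exact ⟨0, fun _ _ => ⟨le_rfl, zero_le_one⟩, fun _ _ _ _ => hr0.trans (abs_nonneg _)⟩
      obtain ⟨k, d, hkd, hlt⟩ := exists_lt_of_chiC_lt hne ((lt_inv_comm₀ hr0 hpos).mp hr)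
      obtain ⟨g, hgK, hg⟩ := hkd.exists_isCircularColoring
      have hkd_pos : (0 : ℝ) < k / d := by linarith [hkd.two_le_div]
      refine ⟨g, hgK, hg.mono ?_⟩
      rw [← inv_div]
      exact ((lt_inv_comm₀ hkd_pos hr0).mp hlt).le
  refine ⟨fun v => chiC G σ * g v, ?_⟩
  simpa [mul_inv_cancel₀ hpos.ne'] using hg.const_mul hpos.le

end SignedColorings

/-- For a signed graph with `χ((G,σ)) = t + 1`: `χ_c((G,σ)) = t` if and only if
`(G,σ)` has a `(2t,2)`-coloring. -/
theorem chiC_eq_chi_sub_one_iff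
    (G : SimpleGraph V) (σ : V → V → ℤ) (hσ : IsSignature G σ)
    (t : ℕ) (hchi : chi G σ = t + 1) :
    chiC G σ = (t : ℝ) ↔ HasKDColoring G σ (2 * t) 2 := by
  have hne : ∃ k d, HasKDColoring G σ k d := ⟨_, _, hasKDColoring_chi (by omega)⟩
  constructor
  · intro hC
    have ht : 2 ≤ t := by exact_mod_cast hC ▸ two_le_chiC hne
    have : NeZero t := ⟨by omega⟩
    obtain ⟨g, hg⟩ := exists_isCircularColoring_chiC hne
    rw [hC] at hg
    exact ⟨by omega, by omega, by omega, _, hg.isKDColoring_floorAddCeil hσ⟩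
  · intro H
    have ht : 2 ≤ t := by have := H.2.2.1; omega
    refine le_antisymm ((chiC_le H).trans_eq (by push_cast; ring)) (le_chiC hne fun k d hkd => ?_)
    by_contra! hlt
    exact not_hasKDColoring_of_lt_chi (hchi ▸ lt_add_one t)
      (hkd.of_div_lt hσ one_pos (by omega) (by simpa using hlt))
end

section
/- If (G,σ) is an antibalanced signed graph whose underlying graph G is not bipartite, then χ((G,σ)) = 3 and χ_c((G,σ)) = 2. -/
variable {V : Type*}

/-- `(G,σ)` is antibalanced: the signature is switching-equivalent to the
all-negative one, i.e. there is a switching function `θ : V → {±1}` making every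
edge negative. -/
def Antibalanced (G : SimpleGraph V) (σ : V → V → ℤ) : Prop :=
  ∃ θ : V → ℤ, (∀ v, θ v = 1 ∨ θ v = -1) ∧ ∀ v w, G.Adj v w → θ v * σ v w * θ w = -1

/-- If `(G,σ)` is antibalanced and `G` is not bipartite (not 2-colorable), then
`χ((G,σ)) = 3` and `χ_c((G,σ)) = 2`. -/
theorem chi_chiC_of_antibalanced
    (G : SimpleGraph V) (σ : V → V → ℤ) (hσ : IsSignature G σ)
    (hab : Antibalanced G σ) (hbip : ¬ G.Colorable 2) :
    chi G σ = 3 ∧ chiC G σ = 2 := by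
  obtain ⟨θ, hθ1, hθ2⟩ := hab
  have hσ' : ∀ v w, G.Adj v w → σ v w = -(θ v * θ w) := by
    intro v w hvw
    have h := hθ2 v w hvw
    rcases hθ1 v with h1 | h1 <;> rcases hθ1 w with h2 | h2 <;>
      rw [h1, h2] at h ⊢ <;> linarith
  -- no (2,1)-coloring
  have h2 : ¬ HasKDColoring G σ 2 1 := by
    rintro ⟨-, -, -, c, hc⟩
    apply hbip
    have col : G.Coloring (ZMod 2) := by
      refine SimpleGraph.Coloring.mk c ?_
      intro v w hvw h
      have hmin := hc v w hvw
      have hs : ((σ v w : ℤ) : ZMod 2) = 1 := by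
        rcases hσ.2 v w hvw with h1 | h1 <;> rw [h1] <;> decide
      rw [hs, one_mul, h, sub_self] at hmin
      simp at hmin
    simpa using col.colorable
  have mem3 : HasKDColoring G σ 3 1 := by
    refine ⟨by norm_num, by norm_num, by norm_num,
      fun v => ((θ v : ℤ) : ZMod 3), fun v w hvw => ?_⟩
    have hs := hσ' v w hvw
    rcases hθ1 v with h1 | h1 <;> rcases hθ1 w with h2 | h2 <;>
      simp only [hs, h1, h2] <;> decide
  have mem4 : HasKDColoring G σ 4 2 := by
    refine ⟨by norm_num, by norm_num, by norm_num,
      fun v => ((θ v : ℤ) : ZMod 4), fun v w hvw => ?_⟩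
    have hs := hσ' v w hvw
    rcases hθ1 v with h1 | h1 <;> rcases hθ1 w with h2 | h2 <;>
      simp only [hs, h1, h2] <;> decide
  constructor
  · have hlb : ∀ k ∈ { k : ℕ | HasKDColoring G σ k 1 }, 3 ≤ k := by
      intro k hk
      obtain ⟨hk0, -, hk2, hc⟩ := hk
      by_contra hlt
      push_neg at hlt
      interval_cases k
      · exact h2 ⟨by norm_num, by norm_num, by norm_num, hc⟩
    exact le_antisymm (Nat.sInf_le mem3) (le_csInf ⟨3, mem3⟩ hlb)
  · refine IsLeast.csInf_eq ⟨⟨4, 2, mem4, by norm_num⟩, ?_⟩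
    rintro r ⟨k, d, ⟨hk, hd, h2d, -⟩, rfl⟩
    rw [le_div_iff₀ (by exact_mod_cast hd : (0:ℝ) < d)]
    exact_mod_cast h2d
end

section
/- For every even integer k ≥ 2, there exists a signed graph (G,σ) with χ((G,σ)) − 1 = χ_c((G,σ)) = k. -/
/-!
Give each vertex of the positive clique `K_k` two false twins joined by a negative edge. The
clique alone forces `k q ≤ p` for every `(p, q)`-colouring, since its colours are the starts of `k`
disjoint arcs of length `q` in `ℤ_p`. A `(k, 1)`-colouring would be a bijection on the clique, so
each twin repeats the colour of its vertex, and the negative edge between the twins of the vertex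
coloured `0` fails; one extra colour suffices. For even `k`, colouring by `2a + 1` in `ℤ_{2k}` is a
`(2k, 2)`-colouring, so `χ_c = k`.
-/

variable {V : Type*}

/-- `|x|_p` in the paper's notation. -/
def circNorm {p : ℕ} (x : ZMod p) : ℕ :=
  min x.val (-x).val

lemma isKDColoring_iff {G : SimpleGraph V} {σ : V → V → ℤ} {p d : ℕ} {c : V → ZMod p} :
    IsKDColoring G σ p d c ↔ ∀ v w, G.Adj v w → d ≤ circNorm (c v - (σ v w : ZMod p) * c w) :=
  Iff.rfl

section circNorm

variable {p : ℕ}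

lemma circNorm_neg (x : ZMod p) : circNorm (-x) = circNorm x := by
  rw [circNorm, circNorm, neg_neg, min_comm]

lemma one_le_circNorm_iff [NeZero p] {x : ZMod p} : 1 ≤ circNorm x ↔ x ≠ 0 := by
  simp only [circNorm, le_min_iff, Nat.one_le_iff_ne_zero, ne_eq, ZMod.val_eq_zero, neg_eq_zero,
    and_self]

lemma ZMod.even_val [NeZero p] (hp : Even p) {x : ZMod p} (hx : Even x) : Even x.val := by
  obtain ⟨y, rfl⟩ := hx
  rw [ZMod.val_add, Nat.even_iff, Nat.mod_mod_of_dvd _ (even_iff_two_dvd.mp hp), ← Nat.even_iff]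
  exact ⟨_, rfl⟩

lemma two_le_circNorm_of_even [NeZero p] (hp : Even p) {x : ZMod p} (hx : Even x) (hx0 : x ≠ 0) :
    2 ≤ circNorm x := by
  have h1 := one_le_circNorm_iff.mpr hx0
  obtain ⟨r, hr⟩ := ZMod.even_val hp hx
  obtain ⟨s, hs⟩ := ZMod.even_val hp hx.neg
  rw [circNorm] at h1 ⊢
  omega

lemma circNorm_natCast_sub_natCast_lt {q s t : ℕ} (hqp : q ≤ p) (hs : s < q) (ht : t < q) :
    circNorm ((s : ZMod p) - (t : ZMod p)) < q := by
  wlog hts : t ≤ s generalizing s t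
  · rw [← neg_sub, circNorm_neg]
    exact this ht hs (by omega)
  rw [← Nat.cast_sub hts]
  exact (min_le_left _ _).trans_lt (by rw [ZMod.val_natCast_of_lt (by omega)]; omega)

lemma card_mul_le_of_pairwise_le_circNorm {ι : Type*} [Fintype ι] {q : ℕ} [NeZero p]
    (hqp : q ≤ p) (x : ι → ZMod p) (hx : Pairwise fun i j => q ≤ circNorm (x i - x j)) :
    Fintype.card ι * q ≤ p := by
  classical
  let arc (i : ι) : Finset (ZMod p) := (Finset.range q).image fun t : ℕ => x i + t
  have card_arc (i : ι) : (arc i).card = q := by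
    rw [Finset.card_image_of_injOn, Finset.card_range]
    intro s hs t ht hst
    exact CharP.natCast_injOn_Iio (ZMod p) p
      (lt_of_lt_of_le (Finset.mem_range.mp hs) hqp) (lt_of_lt_of_le (Finset.mem_range.mp ht) hqp)
      (add_left_cancel hst)
  have disjoint_arc : Pairwise (Function.onFun Disjoint arc) := by
    intro i j hij
    rw [Function.onFun, Finset.disjoint_left]
    rintro y hi hj
    obtain ⟨t, ht, rfl⟩ := Finset.mem_image.mp hi
    obtain ⟨s, hs, hst⟩ := Finset.mem_image.mp hj
    have hdiff : x i - x j = (s : ZMod p) - (t : ZMod p) := by linear_combination -hst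
    have hq : q ≤ circNorm (x i - x j) := hx hij
    rw [hdiff] at hq
    exact (circNorm_natCast_sub_natCast_lt hqp (Finset.mem_range.mp hs)
      (Finset.mem_range.mp ht)).not_ge hq
  calc Fintype.card ι * q = ∑ i, (arc i).card := by simp [card_arc]
    _ = (Finset.univ.biUnion arc).card := (Finset.card_biUnion fun i _ j _ h => disjoint_arc h).symm
    _ ≤ p := (Finset.card_le_univ _).trans (ZMod.card p).le

end circNorm

section SignedGraph

variable {G : SimpleGraph V} {σ : V → V → ℤ}

lemma isKDColoring_one_iff {p : ℕ} [NeZero p] {c : V → ZMod p} :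
    IsKDColoring G σ p 1 c ↔ ∀ v w, G.Adj v w → c v ≠ (σ v w : ZMod p) * c w := by
  simp only [isKDColoring_iff, one_le_circNorm_iff, sub_ne_zero]

lemma HasKDColoring.card_mul_le_of_positive_clique {ι : Type*} [Fintype ι] {p q : ℕ}
    (h : HasKDColoring G σ p q) (f : ι → V)
    (hf : Pairwise fun i j => G.Adj (f i) (f j) ∧ σ (f i) (f j) = 1) :
    Fintype.card ι * q ≤ p := by
  obtain ⟨hp, -, hqp, c, hc⟩ := h
  have : NeZero p := ⟨hp.ne'⟩
  refine card_mul_le_of_pairwise_le_circNorm (by omega) (c ∘ f) fun i j hij => ?_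
  have hcij := hc _ _ (hf hij).1
  rwa [(hf hij).2, Int.cast_one, one_mul] at hcij

lemma chi_eq_of_hasKDColoring {n : ℕ} (h : HasKDColoring G σ n 1)
    (hlt : ∀ m < n, ¬ HasKDColoring G σ m 1) : chi G σ = n :=
  le_antisymm (Nat.sInf_le h) (le_csInf ⟨n, h⟩ fun m hm => not_lt.mp fun hmn => hlt m hmn hm)

lemma chiC_eq_of_hasKDColoring {k p q : ℕ} (h : HasKDColoring G σ p q) (hpq : p = k * q)
    (hle : ∀ p q, HasKDColoring G σ p q → k * q ≤ p) : chiC G σ = k := by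
  refine IsLeast.csInf_eq ⟨⟨p, q, h, ?_⟩, ?_⟩
  · rw [hpq, Nat.cast_mul, mul_div_cancel_right₀ _ (by exact_mod_cast h.2.1.ne')]
  · rintro r ⟨p, q, hpq, rfl⟩
    rw [le_div_iff₀ (by exact_mod_cast hpq.2.1)]
    exact_mod_cast hle p q hpq

variable {W : Type*} (e : W ≃ V)

lemma IsSignature.comap (h : IsSignature G σ) :
    IsSignature (G.comap e) fun v w => σ (e v) (e w) :=
  ⟨fun _ _ => h.1 _ _, fun _ _ hvw => h.2 _ _ hvw⟩

lemma hasKDColoring_comap_equiv {p q : ℕ} :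
    HasKDColoring (G.comap e) (fun v w => σ (e v) (e w)) p q ↔ HasKDColoring G σ p q := by
  refine and_congr_right' <| and_congr_right' <| and_congr_right' ⟨?_, ?_⟩
  · rintro ⟨c, hc⟩
    refine ⟨c ∘ e.symm, fun v w hvw => ?_⟩
    simpa using hc (e.symm v) (e.symm w) (by simpa using hvw)
  · rintro ⟨c, hc⟩
    exact ⟨c ∘ e, fun v w hvw => hc (e v) (e w) hvw⟩

lemma chi_comap_equiv : chi (G.comap e) (fun v w => σ (e v) (e w)) = chi G σ := by
  simp only [chi, hasKDColoring_comap_equiv]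

lemma chiC_comap_equiv : chiC (G.comap e) (fun v w => σ (e v) (e w)) = chiC G σ := by
  simp only [chiC, hasKDColoring_comap_equiv]

end SignedGraph

/-- The clique is `{0} × Fin k`; `(1, a)` and `(2, a)` are the twins of `(0, a)`. -/
def twinnedClique (k : ℕ) : SimpleGraph (Fin 3 × Fin k) where
  Adj u v := ((u.1 = 0 ∨ v.1 = 0) ∧ u.2 ≠ v.2) ∨ (u.1 ≠ 0 ∧ v.1 ≠ 0 ∧ u.1 ≠ v.1 ∧ u.2 = v.2)
  symm := ⟨fun u v h => by
    rcases h with ⟨h, hne⟩ | ⟨hu, hv, hne, heq⟩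
    · exact Or.inl ⟨h.symm, hne.symm⟩
    · exact Or.inr ⟨hv, hu, hne.symm, heq.symm⟩⟩
  loopless := ⟨fun u h => by simp at h⟩

def twinnedCliqueSign (k : ℕ) (u v : Fin 3 × Fin k) : ℤ :=
  if u.1 ≠ 0 ∧ v.1 ≠ 0 then -1 else 1

namespace twinnedClique

variable {k : ℕ} {i j : Fin 3} {a b : Fin k}

lemma adj_iff : (twinnedClique k).Adj (i, a) (j, b) ↔
    ((i = 0 ∨ j = 0) ∧ a ≠ b) ∨ (i ≠ 0 ∧ j ≠ 0 ∧ i ≠ j ∧ a = b) :=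
  Iff.rfl

lemma sign_eq_one (h : i = 0 ∨ j = 0) : twinnedCliqueSign k (i, a) (j, b) = 1 :=
  if_neg fun h' => h.elim h'.1 h'.2

lemma sign_eq_neg_one (hi : i ≠ 0) (hj : j ≠ 0) : twinnedCliqueSign k (i, a) (j, b) = -1 :=
  if_pos ⟨hi, hj⟩

lemma isSignature : IsSignature (twinnedClique k) (twinnedCliqueSign k) := by
  refine ⟨fun u v => ?_, fun u v _ => ?_⟩ <;> unfold twinnedCliqueSign
  · simp only [and_comm]
  · split_ifs <;> simp

lemma mul_le_of_hasKDColoring {p q : ℕ}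
    (h : HasKDColoring (twinnedClique k) (twinnedCliqueSign k) p q) : k * q ≤ p := by
  simpa using h.card_mul_le_of_positive_clique (fun a => ((0 : Fin 3), a))
    fun a b hab => ⟨adj_iff.mpr (Or.inl ⟨Or.inl rfl, hab⟩), sign_eq_one (Or.inl rfl)⟩

lemma not_hasKDColoring_self : ¬ HasKDColoring (twinnedClique k) (twinnedCliqueSign k) k 1 := by
  rintro ⟨hk, -, -, c, hc⟩
  have : NeZero k := ⟨hk.ne'⟩
  rw [isKDColoring_one_iff] at hc
  have hpos (i j : Fin 3) (a b : Fin k) (hij : i = 0 ∨ j = 0) (hab : a ≠ b) :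
      c (i, a) ≠ c (j, b) := by
    simpa [sign_eq_one hij] using hc (i, a) (j, b) (adj_iff.mpr (Or.inl ⟨hij, hab⟩))
  have hbij : Function.Bijective fun a => c (0, a) :=
    (Fintype.bijective_iff_injective_and_card _).mpr
      ⟨fun a b hab => by_contra fun hne => hpos 0 0 a b (Or.inl rfl) hne hab, by simp⟩
  have htwin (i : Fin 3) (a : Fin k) (hi : i ≠ 0) : c (i, a) = c (0, a) := by
    obtain ⟨b, hb⟩ := hbij.2 (c (i, a))
    obtain rfl | hba := eq_or_ne b a
    · exact hb.symm
    · exact absurd hb.symm (hpos i 0 a b (Or.inr rfl) hba.symm)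
  obtain ⟨a, ha⟩ := hbij.2 0
  have h12 := hc (1, a) (2, a) (adj_iff.mpr (Or.inr ⟨by simp, by simp, by simp, rfl⟩))
  simp [htwin 1 a (by simp), htwin 2 a (by simp), ha] at h12

lemma hasKDColoring_succ (hk : 2 ≤ k) :
    HasKDColoring (twinnedClique k) (twinnedCliqueSign k) (k + 1) 1 := by
  have cast_ne {m n : ℕ} (hm : m ≤ k) (hn : n ≤ k) (hmn : m ≠ n) : (m : ZMod (k + 1)) ≠ n :=
    fun h => hmn (CharP.natCast_injOn_Iio (ZMod (k + 1)) (k + 1) (Nat.lt_succ_of_le hm)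
      (Nat.lt_succ_of_le hn) h)
  -- both twins get the spare colour `k`, and `k ≠ -k = 1` in `ZMod (k + 1)`
  refine ⟨k.succ_pos, one_pos, by omega,
    fun u => ((if u.1 = 0 then u.2.val else k : ℕ) : ZMod (k + 1)), isKDColoring_one_iff.mpr ?_⟩
  rintro ⟨i, a⟩ ⟨j, b⟩ hadj
  rcases adj_iff.mp hadj with ⟨hij, hab⟩ | ⟨hi, hj, -, rfl⟩
  · rw [sign_eq_one hij, Int.cast_one, one_mul]
    have := Fin.val_ne_of_ne hab
    show ((if i = 0 then a.val else k : ℕ) : ZMod (k + 1)) ≠ ((if j = 0 then b.val else k : ℕ))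
    apply cast_ne (by split_ifs <;> omega) (by split_ifs <;> omega)
    rcases hij with rfl | rfl <;> split_ifs <;> omega
  · have hneg : -(k : ZMod (k + 1)) = (1 : ℕ) := by
      rw [neg_eq_iff_add_eq_zero, ← Nat.cast_add, ZMod.natCast_self]
    simp only [sign_eq_neg_one hi hj, if_neg hi, if_neg hj, Int.cast_neg, Int.cast_one,
      neg_one_mul, hneg]
    exact cast_ne le_rfl (by omega) (by omega)

lemma hasKDColoring_two_mul (hk : 2 ≤ k) (hke : Even k) :
    HasKDColoring (twinnedClique k) (twinnedCliqueSign k) (2 * k) 2 := by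
  have : NeZero (2 * k) := ⟨by omega⟩
  -- clique differences and twin sums of odd colours are even, so nonzero ones have norm `≥ 2`
  let c (u : Fin 3 × Fin k) : ZMod (2 * k) := ((2 * u.2.val + 1 : ℕ) : ZMod (2 * k))
  have hodd (u : Fin 3 × Fin k) : Odd (c u) := (odd_two_mul_add_one u.2.val).natCast
  refine ⟨by omega, two_pos, by omega, c, ?_⟩
  rintro ⟨i, a⟩ ⟨j, b⟩ hadj
  rcases adj_iff.mp hadj with ⟨hij, hab⟩ | ⟨hi, hj, -, rfl⟩
  · rw [sign_eq_one hij, Int.cast_one, one_mul]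
    refine two_le_circNorm_of_even (even_two_mul k) ((hodd _).sub_odd (hodd _))
      (sub_ne_zero.mpr ?_)
    have hab' : 2 * a.val + 1 ≠ 2 * b.val + 1 := by have := Fin.val_ne_of_ne hab; omega
    exact fun h => hab' (CharP.natCast_injOn_Iio (ZMod (2 * k)) (2 * k)
      (Set.mem_Iio.mpr (show 2 * a.val + 1 < 2 * k by omega))
      (Set.mem_Iio.mpr (show 2 * b.val + 1 < 2 * k by omega)) h)
  · rw [sign_eq_neg_one hi hj, Int.cast_neg, Int.cast_one, neg_one_mul, sub_neg_eq_add]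
    refine two_le_circNorm_of_even (even_two_mul k) ((hodd _).add_odd (hodd _)) ?_
    show ((2 * a.val + 1 : ℕ) : ZMod (2 * k)) + ((2 * a.val + 1 : ℕ) : ZMod (2 * k)) ≠ 0
    rw [← Nat.cast_add, ne_eq, ZMod.natCast_eq_zero_iff]
    intro hdvd
    have : 2 ∣ 2 * a.val + 1 := (even_iff_two_dvd.mp hke).trans
      (Nat.dvd_of_mul_dvd_mul_left two_pos (by rw [two_mul (2 * a.val + 1)]; exact hdvd))
    omega

lemma chi_eq (hk : 2 ≤ k) : chi (twinnedClique k) (twinnedCliqueSign k) = k + 1 := by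
  refine chi_eq_of_hasKDColoring (hasKDColoring_succ hk) fun m hm hcol => ?_
  obtain rfl | hmk := eq_or_ne m k
  · exact not_hasKDColoring_self hcol
  · have := mul_le_of_hasKDColoring hcol
    omega

lemma chiC_eq (hk : 2 ≤ k) (hke : Even k) : chiC (twinnedClique k) (twinnedCliqueSign k) = k :=
  chiC_eq_of_hasKDColoring (hasKDColoring_two_mul hk hke) (mul_comm 2 k)
    fun _ _ => mul_le_of_hasKDColoring

end twinnedClique

/-- For every even `k ≥ 2`, there is a signed graph `(G,σ)` with
`χ((G,σ)) - 1 = χ_c((G,σ)) = k`. -/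
theorem exists_signedGraph_chi_sub_one_eq_chiC
    (k : ℕ) (hk : 2 ≤ k) (hke : Even k) :
    ∃ (n : ℕ) (G : SimpleGraph (Fin n)) (σ : Fin n → Fin n → ℤ),
      IsSignature G σ ∧ chi G σ = k + 1 ∧ chiC G σ = (k : ℝ) := by
  let e : Fin (3 * k) ≃ Fin 3 × Fin k := finProdFinEquiv.symm
  refine ⟨3 * k, (twinnedClique k).comap e, fun u v => twinnedCliqueSign k (e u) (e v),
    twinnedClique.isSignature.comap e, ?_, ?_⟩
  · rw [chi_comap_equiv, twinnedClique.chi_eq hk]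
  · rw [chiC_comap_equiv, twinnedClique.chiC_eq hk hke]
end

section
/- For every signed graph (G,σ), χ_±((G,σ)) − 1 ≤ χ((G,σ)) ≤ χ_±((G,σ)) + 1. -/
variable {V : Type*}

/-- The color set `M_n ⊆ ℤ`: for `n = 2k+1`, `M_n = {0, ±1, …, ±k}`;
for `n = 2k`, `M_n = {±1, …, ±k}`. -/
def Mset (n : ℕ) : Set ℤ :=
  { z : ℤ | z.natAbs ≤ n / 2 ∧ (Even n → z ≠ 0) }

/-- An `n`-coloring in the sense of Máčajová–Raspaud–Škoviera: a map `c : V → M_n`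
with `c v ≠ σ(vw) * c w` for every edge `vw`. -/
def HasPMColoring (G : SimpleGraph V) (σ : V → V → ℤ) (n : ℕ) : Prop :=
  ∃ c : V → ℤ, (∀ v, c v ∈ Mset n) ∧ ∀ v w, G.Adj v w → c v ≠ σ v w * c w

/-- `χ_±((G,σ))`: the least `n ≥ 1` for which `(G,σ)` has an `n`-coloring with
colors in `M_n`. -/
noncomputable def chiPM (G : SimpleGraph V) (σ : V → V → ℤ) : ℕ :=
  sInf { n : ℕ | 0 < n ∧ HasPMColoring G σ n }

/-! ### Auxiliary lemmas -/

lemma one_le_min_iff_aux (k : ℕ) [NeZero k] (x : ZMod k) :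
    1 ≤ min x.val (-x).val ↔ x ≠ 0 := by
  rw [le_min_iff]
  simp [Nat.one_le_iff_ne_zero, ZMod.val_eq_zero, neg_eq_zero]

lemma int_ne_zero_zmod (k : ℕ) (y : ℤ) (hy : y ≠ 0) (hlt : y.natAbs < k) :
    (y : ZMod k) ≠ 0 := by
  intro h
  have hd : (k : ℤ) ∣ y := (ZMod.intCast_zmod_eq_zero_iff_dvd y k).mp h
  have hd' : k ∣ y.natAbs := by
    have := Int.natAbs_dvd_natAbs.mpr hd
    simpa using this
  have hpos : 0 < y.natAbs := Int.natAbs_pos.mpr hy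
  have := Nat.le_of_dvd hpos hd'
  omega

/-- Map `ZMod k` into the set `M_{k+1} ⊆ ℤ`. -/
def sgF (k : ℕ) (a : ZMod k) : ℤ :=
  if a.val = 0 ∧ Odd k then (((k + 1) / 2 : ℕ) : ℤ)
  else if 2 * a.val ≤ k then (a.val : ℤ) else (a.val : ℤ) - k

lemma sgF_cast (k : ℕ) [NeZero k] (a : ZMod k) (h : ¬(a.val = 0 ∧ Odd k)) :
    ((sgF k a : ℤ) : ZMod k) = a := by
  unfold sgF
  rw [if_neg h]
  split
  · push_cast
    simp [ZMod.natCast_val, ZMod.cast_id]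
  · push_cast
    simp [ZMod.natCast_val, ZMod.cast_id, ZMod.natCast_self]

lemma sgF_mem (k : ℕ) (hk : 2 ≤ k) (a : ZMod k) : sgF k a ∈ Mset (k + 1) := by
  haveI : NeZero k := ⟨by omega⟩
  have hal : a.val < k := ZMod.val_lt a
  constructor
  · unfold sgF
    split_ifs <;> omega
  · intro he
    have hke : (k + 1) % 2 = 0 := Nat.even_iff.mp he
    unfold sgF
    split_ifs with h1 h2
    · omega
    · rw [Nat.odd_iff] at h1
      omega
    · omega

lemma sgF_main (k : ℕ) (hk : 2 ≤ k) (a b : ZMod k) (s : ℤ) (hs : s = 1 ∨ s = -1)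
    (h : a ≠ (s : ZMod k) * b) : sgF k a ≠ s * sgF k b := by
  haveI : NeZero k := ⟨by omega⟩
  intro heq
  by_cases ha : a.val = 0 ∧ Odd k
  · by_cases hb : b.val = 0 ∧ Odd k
    · have ha0 : a = 0 := (ZMod.val_eq_zero a).mp ha.1
      have hb0 : b = 0 := (ZMod.val_eq_zero b).mp hb.1
      exact h (by rw [ha0, hb0, mul_zero])
    · have hbl : b.val < k := ZMod.val_lt b
      have hk1 : k % 2 = 1 := Nat.odd_iff.mp ha.2
      unfold sgF at heq
      rw [if_pos ha, if_neg hb] at heq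
      rw [Nat.odd_iff] at hb
      rcases hs with rfl | rfl <;> split_ifs at heq <;> omega
  · by_cases hb : b.val = 0 ∧ Odd k
    · have hal : a.val < k := ZMod.val_lt a
      have hk1 : k % 2 = 1 := Nat.odd_iff.mp hb.2
      unfold sgF at heq
      rw [if_neg ha, if_pos hb] at heq
      rw [Nat.odd_iff] at ha
      rcases hs with rfl | rfl <;> split_ifs at heq <;> omega
    · apply h
      have ca := sgF_cast k a ha
      have cb := sgF_cast k b hb
      calc a = ((sgF k a : ℤ) : ZMod k) := ca.symm
        _ = ((s * sgF k b : ℤ) : ZMod k) := by rw [heq]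
        _ = (s : ZMod k) * b := by rw [Int.cast_mul, cb]

lemma hasPM_of_kd (G : SimpleGraph V) (σ : V → V → ℤ) (hσ : IsSignature G σ)
    (k : ℕ) (h : HasKDColoring G σ k 1) : HasPMColoring G σ (k + 1) := by
  obtain ⟨hk0, -, h2k, c, hc⟩ := h
  haveI : NeZero k := ⟨by omega⟩
  refine ⟨fun v => sgF k (c v), fun v => sgF_mem k (by omega) (c v), fun v w hadj => ?_⟩
  have hne : c v - (σ v w : ZMod k) * c w ≠ 0 :=
    (one_le_min_iff_aux k _).mp (hc v w hadj)
  exact sgF_main k (by omega) (c v) (c w) (σ v w) (hσ.2 v w hadj)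
    (fun he => hne (by rw [he, sub_self]))

lemma hasKD_of_PM (G : SimpleGraph V) (σ : V → V → ℤ) (hσ : IsSignature G σ)
    (n : ℕ) (hn : 0 < n) (h : HasPMColoring G σ n) : HasKDColoring G σ (n + 1) 1 := by
  obtain ⟨c, hmem, hc⟩ := h
  haveI : NeZero (n + 1) := ⟨by omega⟩
  refine ⟨by omega, by omega, by omega, fun v => ((c v : ℤ) : ZMod (n + 1)),
    fun v w hadj => ?_⟩
  rw [one_le_min_iff_aux]
  have hy : (c v - σ v w * c w : ℤ) ≠ 0 := sub_ne_zero.mpr (hc v w hadj)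
  have hav : (c v).natAbs ≤ n / 2 := (hmem v).1
  have haw : (c w).natAbs ≤ n / 2 := (hmem w).1
  have hlt : (c v - σ v w * c w).natAbs < n + 1 := by
    rcases hσ.2 v w hadj with hs | hs <;> rw [hs] <;> omega
  have := int_ne_zero_zmod (n + 1) _ hy hlt
  intro h0
  apply this
  push_cast
  linear_combination h0

lemma kd_nonempty [Fintype V] (G : SimpleGraph V) (σ : V → V → ℤ) (hσ : IsSignature G σ) :
    HasKDColoring G σ (2 * Fintype.card V + 2) 1 := by
  set N := Fintype.card V with hN
  set k := 2 * N + 2 with hkdef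
  haveI : NeZero k := ⟨by omega⟩
  let e := Fintype.equivFin V
  refine ⟨by omega, by omega, by omega,
    fun v => ((((e v : ℕ) : ℤ) + 1 : ℤ) : ZMod k), fun v w hadj => ?_⟩
  rw [one_le_min_iff_aux]
  have hvw : v ≠ w := G.ne_of_adj hadj
  have hij : (e v : ℕ) ≠ (e w : ℕ) := fun hh => hvw (e.injective (Fin.val_injective hh))
  have hiv : (e v : ℕ) < N := (e v).isLt
  have hiw : (e w : ℕ) < N := (e w).isLt
  have key : (((e v : ℕ) : ℤ) + 1 - σ v w * (((e w : ℕ) : ℤ) + 1) : ℤ) ≠ 0 ∧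
      (((e v : ℕ) : ℤ) + 1 - σ v w * (((e w : ℕ) : ℤ) + 1) : ℤ).natAbs < k := by
    rcases hσ.2 v w hadj with hs | hs <;> rw [hs] <;> constructor <;> omega
  have := int_ne_zero_zmod k _ key.1 key.2
  intro h0
  apply this
  push_cast
  rw [← h0]
  push_cast
  ring

lemma pm_nonempty [Fintype V] (G : SimpleGraph V) (σ : V → V → ℤ) (hσ : IsSignature G σ) :
    0 < 2 * Fintype.card V + 2 ∧ HasPMColoring G σ (2 * Fintype.card V + 2) := by
  set N := Fintype.card V with hN
  let e := Fintype.equivFin V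
  refine ⟨by omega, fun v => ((e v : ℕ) : ℤ) + 1, fun v => ?_, fun v w hadj => ?_⟩
  · have hiv : (e v : ℕ) < N := (e v).isLt
    show (((e v : ℕ) : ℤ) + 1).natAbs ≤ (2 * N + 2) / 2 ∧
      (Even (2 * N + 2) → ((e v : ℕ) : ℤ) + 1 ≠ 0)
    exact ⟨by omega, fun _ => by omega⟩
  · have hvw : v ≠ w := G.ne_of_adj hadj
    have hij : (e v : ℕ) ≠ (e w : ℕ) := fun hh => hvw (e.injective (Fin.val_injective hh))
    show ((e v : ℕ) : ℤ) + 1 ≠ σ v w * (((e w : ℕ) : ℤ) + 1)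
    rcases hσ.2 v w hadj with hs | hs <;> rw [hs] <;> omega

/-- For every signed graph, `χ_± - 1 ≤ χ ≤ χ_± + 1`. -/
theorem chi_le_chiPM_add_one
    [Fintype V] (G : SimpleGraph V) (σ : V → V → ℤ) (hσ : IsSignature G σ) :
    chiPM G σ ≤ chi G σ + 1 ∧ chi G σ ≤ chiPM G σ + 1 := by
  have hS1 : {k : ℕ | HasKDColoring G σ k 1}.Nonempty :=
    ⟨2 * Fintype.card V + 2, kd_nonempty G σ hσ⟩
  have hS2 : {n : ℕ | 0 < n ∧ HasPMColoring G σ n}.Nonempty :=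
    ⟨2 * Fintype.card V + 2, pm_nonempty G σ hσ⟩
  have h1 : HasKDColoring G σ (chi G σ) 1 := Nat.sInf_mem hS1
  have h2 : 0 < chiPM G σ ∧ HasPMColoring G σ (chiPM G σ) := Nat.sInf_mem hS2
  constructor
  · exact Nat.sInf_le ⟨by omega, hasPM_of_kd G σ hσ _ h1⟩
  · exact Nat.sInf_le (hasKD_of_PM G σ hσ _ h2.1 h2.2)
end
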